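/- arXiv:1807.04921 — 6 statements merged into one kernel-verified Lean document; each statement's English description precedes it below -/
import Mathlib

section
/- For every integer d > 1 and every real t ≥ 0, the function A(t) = d·log Γ(t/d + 1) − log Γ(t + 1) satisfies A''(t) < 0; that is, A is strictly concave on [0, ∞). -/
open Real Filter Topology Set Finset

noncomputable def myTrm (m : ℕ) (x : ℝ) : ℝ := Real.log ((m+2)/(m+1)) - 1/(x+m+1)

noncomputable def myPsi (x : ℝ) : ℝ := -(1/x) + ∑' m : ℕ, myTrm m x

noncomputable def myTg (x : ℝ) : ℝ := ∑' m : ℕ, 1/(x+(m:ℝ))^2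

lemma sum_inv_sq_summable : Summable (fun m : ℕ => 1/((m:ℝ)+1)^2) := by
  have := (summable_nat_add_iff (f := fun n : ℕ => 1/(n:ℝ)^2) 1).mpr
    (Real.summable_one_div_nat_pow.mpr one_lt_two)
  simpa using this

lemma myTrm_bound {X : ℝ} (hX : 0 < X) {x : ℝ} (hx : 0 < x) (hxX : x ≤ X) (m : ℕ) :
    ‖myTrm m x‖ ≤ (1+X)/((m:ℝ)+1)^2 := by
  have hm1 : (0:ℝ) < (m:ℝ)+1 := by positivity
  set u : ℝ := 1/((m:ℝ)+1) with hu
  have hu0 : 0 < u := by positivity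
  have hlogeq : Real.log (((m:ℝ)+2)/((m:ℝ)+1)) = Real.log (1+u) := by
    rw [hu]; congr 1; field_simp; ring
  have h1u : (0:ℝ) < 1 + u := by linarith
  have hub : Real.log (1+u) ≤ u := by
    have := Real.log_le_sub_one_of_pos h1u
    linarith
  have hlb : u - u^2 ≤ Real.log (1+u) := by
    have h := Real.log_le_sub_one_of_pos (x := 1/(1+u)) (by positivity)
    rw [Real.log_div one_ne_zero h1u.ne', Real.log_one] at h
    have h2 : 1 - 1/(1+u) ≤ Real.log (1+u) := by linarith
    have h3 : u - u^2 ≤ 1 - 1/(1+u) := by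
      have e : 1 - 1/(1+u) = u/(1+u) := by field_simp; ring
      rw [e, le_div_iff₀ h1u]
      nlinarith [hu0.le, sq_nonneg u]
    linarith
  have hxm : (0:ℝ) < x + m + 1 := by positivity
  have hXm : (0:ℝ) < X + ((m:ℝ)+1) := by positivity
  have hinv_ub : 1/(x+(m:ℝ)+1) ≤ u := by
    rw [hu, div_le_div_iff₀ hxm hm1]
    nlinarith
  have hinv_lb : u - X*u^2 ≤ 1/(x+(m:ℝ)+1) := by
    have h1 : 1/(X+(m:ℝ)+1) ≤ 1/(x+(m:ℝ)+1) := by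
      apply one_div_le_one_div_of_le hxm; linarith
    have h2 : u - X*u^2 ≤ 1/(X+(m:ℝ)+1) := by
      have e : u - X*u^2 = (((m:ℝ)+1) - X)/((m:ℝ)+1)^2 := by
        rw [hu]; field_simp
      have e2 : X + (m:ℝ) + 1 = X + ((m:ℝ)+1) := by ring
      rw [e, e2, div_le_div_iff₀ (by positivity) hXm]
      nlinarith [sq_nonneg X]
    linarith
  rw [Real.norm_eq_abs, abs_le]
  have hbound1 : u^2 ≤ (1+X)/((m:ℝ)+1)^2 := by
    rw [hu, div_pow, one_pow]; gcongr; linarith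
  have hbound2 : X*u^2 ≤ (1+X)/((m:ℝ)+1)^2 := by
    rw [hu, div_pow, one_pow, mul_one_div]; gcongr; linarith
  constructor
  · simp only [myTrm]; push_cast; rw [hlogeq]; nlinarith [hlb, hinv_ub]
  · simp only [myTrm]; push_cast; rw [hlogeq]; nlinarith [hub, hinv_lb]

noncomputable def myF' (n : ℕ) (x : ℝ) : ℝ := Real.log n - ∑ m ∈ Finset.range (n+1), 1/(x+(m:ℝ))

noncomputable def myF'' (n : ℕ) (x : ℝ) : ℝ := ∑ m ∈ Finset.range (n+1), 1/(x+(m:ℝ))^2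

lemma myF'_eq (n : ℕ) (x : ℝ) :
    myF' n x = (-(1/x) + ∑ m ∈ Finset.range n, myTrm m x) + (Real.log n - Real.log (n+1)) := by
  simp only [myF', myTrm]
  rw [Finset.sum_sub_distrib]
  have h1 : ∑ m ∈ Finset.range n, Real.log (((m:ℝ)+2)/((m:ℝ)+1)) = Real.log (n+1) := by
    have : ∀ m : ℕ, Real.log (((m:ℝ)+2)/((m:ℝ)+1))
        = Real.log ((m+1:ℕ)+1) - Real.log ((m:ℕ)+1) := by
      intro m
      rw [Real.log_div (by positivity) (by positivity)]
      push_cast; ring_nf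
    rw [Finset.sum_congr rfl (fun m _ => this m), Finset.sum_range_sub (fun k => Real.log ((k:ℕ)+1))]
    push_cast; simp
  have h2 : ∑ m ∈ Finset.range (n+1), 1/(x+(m:ℝ)) = 1/x + ∑ m ∈ Finset.range n, 1/(x+(m:ℝ)+1) := by
    rw [Finset.sum_range_succ']
    have e : ∀ m:ℕ, 1/(x+((m+1:ℕ):ℝ)) = 1/(x+(m:ℝ)+1) := fun m => by push_cast; ring_nf
    simp only [e, Nat.cast_zero, add_zero]
    ring
  rw [h1, h2]; ring

lemma hasDerivAt_logGammaSeq (n : ℕ) {x : ℝ} (hx : 0 < x) :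
    HasDerivAt (fun y => Real.BohrMollerup.logGammaSeq y n) (myF' n x) x := by
  have hsum : HasDerivAt (fun y : ℝ => ∑ m ∈ Finset.range (n+1), Real.log (y+(m:ℝ)))
      (∑ m ∈ Finset.range (n+1), 1/(x+(m:ℝ))) x := by
    apply HasDerivAt.fun_sum
    intro m _
    have hxm : x + (m:ℝ) ≠ 0 := by positivity
    have h := (Real.hasDerivAt_log hxm).comp x ((hasDerivAt_id x).add_const (m:ℝ))
    simpa [one_div, Function.comp_def] using h
  have h1 : HasDerivAt (fun y : ℝ => y * Real.log n + Real.log (Nat.factorial n))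
      (Real.log n) x := by
    simpa using ((hasDerivAt_id x).mul_const (Real.log n)).add_const (Real.log (Nat.factorial n))
  have := h1.sub hsum
  simp only [Real.BohrMollerup.logGammaSeq, myF']
  exact this

lemma tlu_myF' : TendstoLocallyUniformlyOn myF' myPsi atTop (Set.Ioi (0:ℝ)) := by
  rw [tendstoLocallyUniformlyOn_iff_forall_isCompact isOpen_Ioi]
  intro K hK hKc
  rcases K.eq_empty_or_nonempty with rfl | hne
  · simp [tendstoUniformlyOn_empty]
  obtain ⟨X, hXK, hXmax'⟩ := hKc.exists_isMaxOn hne continuousOn_id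
  have hX : 0 < X := hK hXK
  have hXmax : ∀ x ∈ K, x ≤ X := fun x hx => hXmax' hx
  -- uniform convergence of the series part
  have hu : Summable (fun m : ℕ => (1+X)/((m:ℝ)+1)^2) :=
    (sum_inv_sq_summable.mul_left (1+X)).congr (fun m => by rw [mul_one_div])
  have hs : TendstoUniformlyOn (fun n x => ∑ m ∈ Finset.range n, myTrm m x)
      (fun x => ∑' m, myTrm m x) atTop K := by
    apply tendstoUniformlyOn_tsum_nat hu
    intro m x hx
    exact myTrm_bound hX (hK hx) (hXmax x hx) m
  have hinv : TendstoUniformlyOn (fun _ : ℕ => fun x : ℝ => -(1/x))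
      (fun x => -(1/x)) atTop K := by
    rw [Metric.tendstoUniformlyOn_iff]
    intro ε hε
    filter_upwards with n x hx
    simpa using hε
  have hc : TendstoUniformlyOn (fun n : ℕ => fun _ : ℝ => Real.log n - Real.log (n+1))
      (fun _ => 0) atTop K := by
    rw [Metric.tendstoUniformlyOn_iff]
    intro ε hε
    have h0 : Tendsto (fun n : ℕ => Real.log n - Real.log (n+1)) atTop (𝓝 0) := by
      have := Real.tendsto_log_nat_add_one_sub_log
      simpa using this.neg
    filter_upwards [(Metric.tendsto_nhds.mp h0) ε hε] with n hn x _
    simpa [dist_comm] using hn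
  have := (hinv.add hs).add hc
  have heq : myF' = fun (n : ℕ) x => (-(1/x) + ∑ m ∈ Finset.range n, myTrm m x)
      + (Real.log n - Real.log (n+1)) := funext fun n => funext fun x => myF'_eq n x
  rw [heq]
  convert this using 1
  case e'_5 => rfl
  funext x
  simp [myPsi]

lemma inv_sq_bound {e : ℝ} (he : 0 < e) {x : ℝ} (hx : e ≤ x) (m : ℕ) :
    ‖1/(x+(m:ℝ))^2‖ ≤ (1+1/e)^2/((m:ℝ)+1)^2 := by
  have hm : (0:ℝ) ≤ (m:ℝ) := Nat.cast_nonneg m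
  have hxm : (0:ℝ) < x + m := by linarith
  have hem : (0:ℝ) < e + m := by linarith
  have key : (m:ℝ)+1 ≤ (1+1/e)*(e+m) := by
    have : (1+1/e)*(e+m) = e + m + 1 + m/e := by field_simp; ring
    rw [this]
    have : 0 ≤ (m:ℝ)/e := by positivity
    linarith
  have h1 : 1/(x+(m:ℝ))^2 ≤ 1/(e+(m:ℝ))^2 := by
    gcongr
  have h2 : 1/(e+(m:ℝ))^2 ≤ (1+1/e)^2/((m:ℝ)+1)^2 := by
    rw [div_le_div_iff₀ (by positivity) (by positivity), one_mul]
    calc ((m:ℝ)+1)^2 ≤ ((1+1/e)*(e+m))^2 := by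
          apply pow_le_pow_left₀ (by positivity) key
      _ = (1+1/e)^2 * (e+(m:ℝ))^2 := by ring
  rw [Real.norm_eq_abs, abs_of_nonneg (by positivity)]
  linarith

lemma summable_inv_sq_shift {x : ℝ} (hx : 0 < x) : Summable (fun m : ℕ => 1/(x+(m:ℝ))^2) := by
  apply Summable.of_norm_bounded ((sum_inv_sq_summable.mul_left ((1+1/x)^2)).congr
    (fun m => by rw [mul_one_div]))
  exact fun m => inv_sq_bound hx le_rfl m

lemma tlu_myF'' : TendstoLocallyUniformlyOn myF'' myTg atTop (Set.Ioi (0:ℝ)) := by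
  rw [tendstoLocallyUniformlyOn_iff_forall_isCompact isOpen_Ioi]
  intro K hK hKc
  rcases K.eq_empty_or_nonempty with rfl | hne
  · simp [tendstoUniformlyOn_empty]
  obtain ⟨e, heK, hemin'⟩ := hKc.exists_isMinOn hne continuousOn_id
  have he : 0 < e := hK heK
  have hemin : ∀ x ∈ K, e ≤ x := fun x hx => hemin' hx
  have hu : Summable (fun m : ℕ => (1+1/e)^2/((m:ℝ)+1)^2) :=
    (sum_inv_sq_summable.mul_left ((1+1/e)^2)).congr (fun m => by rw [mul_one_div])
  have hs : TendstoUniformlyOn (fun n x => ∑ m ∈ Finset.range n, 1/(x+(m:ℝ))^2)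
      (fun x => ∑' m : ℕ, 1/(x+(m:ℝ))^2) atTop K := by
    apply tendstoUniformlyOn_tsum_nat hu
    intro m x hx
    exact inv_sq_bound he (hemin x hx) m
  have : TendstoUniformlyOn (fun n x => ∑ m ∈ Finset.range (n+1), 1/(x+(m:ℝ))^2)
      (fun x => ∑' m : ℕ, 1/(x+(m:ℝ))^2) atTop K := by
    rw [Metric.tendstoUniformlyOn_iff] at hs ⊢
    intro ε hε
    exact (tendsto_add_atTop_nat 1).eventually (hs ε hε)
  exact this

lemma hasDerivAt_myF' (n : ℕ) {x : ℝ} (hx : 0 < x) :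
    HasDerivAt (myF' n) (myF'' n x) x := by
  have hsum : HasDerivAt (fun y : ℝ => ∑ m ∈ Finset.range (n+1), 1/(y+(m:ℝ)))
      (∑ m ∈ Finset.range (n+1), -(1/(x+(m:ℝ))^2)) x := by
    apply HasDerivAt.fun_sum
    intro m _
    have hxm : x + (m:ℝ) ≠ 0 := by positivity
    have h := (hasDerivAt_inv hxm).comp x ((hasDerivAt_id x).add_const (m:ℝ))
    simpa [one_div, Function.comp_def] using h
  have := hsum.const_sub (Real.log n)
  simp only [myF', myF'']
  refine this.congr_deriv ?_
  simp [Finset.sum_neg_distrib]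

lemma hasDerivAt_logGamma {x : ℝ} (hx : 0 < x) :
    HasDerivAt (fun y => Real.log (Real.Gamma y)) (myPsi x) x := by
  apply hasDerivAt_of_tendstoLocallyUniformlyOn isOpen_Ioi tlu_myF'
    (Filter.Eventually.of_forall fun n => fun y hy => hasDerivAt_logGammaSeq n hy)
    (fun y hy => Real.BohrMollerup.tendsto_log_gamma hy) hx

lemma hasDerivAt_myPsi {x : ℝ} (hx : 0 < x) : HasDerivAt myPsi (myTg x) x := by
  apply hasDerivAt_of_tendstoLocallyUniformlyOn isOpen_Ioi tlu_myF''
    (Filter.Eventually.of_forall fun n => fun y hy => hasDerivAt_myF' n hy)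
    (fun y hy => tlu_myF'.tendsto_at hy) hx

lemma myTg_key (d : ℕ) (hd : 1 < d) {t : ℝ} (ht : 0 ≤ t) :
    (1/(d:ℝ)) * myTg (t/d+1) < myTg (t+1) := by
  haveI : NeZero d := ⟨by omega⟩
  set c : ℝ := (d:ℝ) with hcdef
  have hc : (0:ℝ) < c := by rw [hcdef]; exact_mod_cast Nat.zero_lt_of_lt hd
  have hc1 : (1:ℝ) < c := by rw [hcdef]; exact_mod_cast hd
  -- LHS rewrite
  have hLHS : (1/c) * myTg (t/c+1) = ∑' m : ℕ, c/(t+c+m*c)^2 := by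
    rw [myTg, ← tsum_mul_left]
    apply tsum_congr
    intro m
    have hm : (0:ℝ) ≤ (m:ℝ) := Nat.cast_nonneg m
    have hmc : (0:ℝ) ≤ (m:ℝ)*c := by positivity
    have h2 : t/c+1+(m:ℝ) ≠ 0 := by
      have : 0 < t/c+1+(m:ℝ) := by positivity
      exact this.ne'
    have h3 : t+c+(m:ℝ)*c ≠ 0 := by nlinarith
    field_simp
  -- RHS
  set f : ℕ → ℝ := fun k => 1/(t+1+(k:ℝ))^2 with hfdef
  have hfs : Summable f := summable_inv_sq_shift (by linarith)
  have hF : HasSum (fun p : ℕ × Fin d => f (p.1*d+(p.2:ℕ))) (∑' k, f k) := by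
    have h := (Equiv.hasSum_iff (Nat.divModEquiv d).symm).mpr hfs.hasSum
    convert h using 2 with p
    rfl
  set g : ℕ → ℝ := fun m => ∑ j : Fin d, f (m*d+(j:ℕ)) with hgdef
  have hg : HasSum g (∑' k, f k) :=
    hF.prod_fiberwise (fun m => hasSum_fintype _)
  -- termwise comparisons
  have hle : ∀ m : ℕ, c/(t+c+m*c)^2 ≤ g m := by
    intro m
    have hmc : (0:ℝ) ≤ (m:ℝ)*c := by positivity
    have hpos : (0:ℝ) < t+c+m*c := by nlinarith
    have hterm : ∀ j : Fin d, 1/(t+c+m*c)^2 ≤ f (m*d+(j:ℕ)) := by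
      intro j
      have hj : ((j:ℕ):ℝ) ≤ c - 1 := by
        have : (j:ℕ) ≤ d - 1 := Nat.le_pred_of_lt j.2
        have h2 : ((j:ℕ):ℝ) ≤ ((d-1:ℕ):ℝ) := by exact_mod_cast this
        rw [Nat.cast_sub (by omega)] at h2
        simpa using h2
      have hcast : ((m*d+(j:ℕ) : ℕ):ℝ) = (m:ℝ)*c + (j:ℕ) := by push_cast; ring
      simp only [hfdef, hcast]
      have hb : (0:ℝ) < t+1+((m:ℝ)*c+(j:ℕ)) := by positivity
      apply one_div_le_one_div_of_le (by positivity)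
      have hbase : t+1+((m:ℝ)*c+(j:ℕ)) ≤ t+c+(m:ℝ)*c := by linarith
      exact pow_le_pow_left₀ hb.le hbase 2
    calc c/(t+c+m*c)^2 = (d : ℕ) • (1/(t+c+m*c)^2) := by
          rw [nsmul_eq_mul]; field_simp; exact hcdef
      _ = (Finset.univ : Finset (Fin d)).card • (1/(t+c+m*c)^2) := by
          rw [Finset.card_univ, Fintype.card_fin]
      _ ≤ ∑ j : Fin d, f (m*d+(j:ℕ)) :=
          Finset.card_nsmul_le_sum Finset.univ _ _ (fun j _ => hterm j)
      _ = g m := rfl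
  have hlt0 : c/(t+c+(0:ℕ)*c)^2 < g 0 := by
    have h0 : ((0:ℕ):ℝ)*c = 0 := by simp
    rw [h0, add_zero]
    have hstrict : ∑ _j : Fin d, 1/(t+c)^2 < ∑ j : Fin d, f (0*d+(j:ℕ)) := by
      apply Finset.sum_lt_sum
      · intro j _
        have hj : ((j:ℕ):ℝ) ≤ c - 1 := by
          have : (j:ℕ) ≤ d - 1 := Nat.le_pred_of_lt j.2
          have h2 : ((j:ℕ):ℝ) ≤ ((d-1:ℕ):ℝ) := by exact_mod_cast this
          rw [Nat.cast_sub (by omega)] at h2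
          simpa using h2
        have hcast : ((0*d+(j:ℕ) : ℕ):ℝ) = ((j:ℕ):ℝ) := by push_cast; ring
        simp only [hfdef, hcast]
        have hb : (0:ℝ) < t+1+((j:ℕ):ℝ) := by positivity
        apply one_div_le_one_div_of_le (by positivity)
        have hbase : t+1+((j:ℕ):ℝ) ≤ t+c := by linarith
        exact pow_le_pow_left₀ hb.le hbase 2
      · refine ⟨⟨0, by omega⟩, Finset.mem_univ _, ?_⟩
        have hcast : ((0*d+((⟨0, by omega⟩ : Fin d):ℕ) : ℕ):ℝ) = 0 := by simp
        simp only [hfdef]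
        rw [hcast, add_zero]
        have hb : (0:ℝ) < t+1 := by linarith
        apply one_div_lt_one_div_of_lt (by positivity)
        have hbase : t+1 < t+c := by linarith
        exact pow_lt_pow_left₀ hbase hb.le two_ne_zero
    have hconst : ∑ _j : Fin d, 1/(t+c)^2 = c/(t+c)^2 := by
      rw [Finset.sum_const, Finset.card_univ, Fintype.card_fin, nsmul_eq_mul]
      field_simp
      exact hcdef.symm
    calc c/(t+c)^2 = ∑ _j : Fin d, 1/(t+c)^2 := hconst.symm
      _ < ∑ j : Fin d, f (0*d+(j:ℕ)) := hstrict
      _ = g 0 := rfl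
  have hfinal : ∑' m : ℕ, c/(t+c+m*c)^2 < ∑' m, g m := by
    apply Summable.tsum_lt_tsum_of_nonneg (i := 0)
    · intro m
      have hmc : (0:ℝ) ≤ (m:ℝ)*c := by positivity
      have hpos : (0:ℝ) < t+c+m*c := by nlinarith
      positivity
    · exact hle
    · exact_mod_cast hlt0
    · exact hg.summable
  have hRHS : myTg (t+1) = ∑' m, g m := by
    rw [hg.tsum_eq]
    rfl
  rw [hLHS, hRHS]
  exact hfinal

/-- For integer `d > 1`, the function `A(t) = d·log Γ(t/d + 1) − log Γ(t + 1)` satisfies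
`A''(t) < 0` for all `t ≥ 0`; that is, `A` is strictly concave on `[0, ∞)`. -/
theorem A_second_deriv_neg_and_strictConcave (d : ℕ) (hd : 1 < d) :
    (∀ t : ℝ, 0 ≤ t →
      iteratedDeriv 2
        (fun t : ℝ => d * Real.log (Real.Gamma (t / d + 1)) - Real.log (Real.Gamma (t + 1))) t < 0) ∧
    StrictConcaveOn ℝ (Set.Ici (0:ℝ))
      (fun t : ℝ => d * Real.log (Real.Gamma (t / d + 1)) - Real.log (Real.Gamma (t + 1))) := by
  set A : ℝ → ℝ := fun t : ℝ => d * Real.log (Real.Gamma (t / d + 1)) - Real.log (Real.Gamma (t + 1)) with hA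
  have hc : (0:ℝ) < (d:ℝ) := by exact_mod_cast Nat.zero_lt_of_lt hd
  have hc1 : (1:ℝ) < (d:ℝ) := by exact_mod_cast hd
  have hpos1 : ∀ t : ℝ, t ∈ Set.Ioi (-1:ℝ) → 0 < t/(d:ℝ)+1 := by
    intro t ht
    rw [Set.mem_Ioi] at ht
    have h1 : (-1:ℝ) < t/(d:ℝ) := by
      rw [lt_div_iff₀ hc]
      nlinarith
    linarith
  have hpos2 : ∀ t : ℝ, t ∈ Set.Ioi (-1:ℝ) → 0 < t+1 := by
    intro t ht; rw [Set.mem_Ioi] at ht; linarith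
  have hA1 : ∀ t ∈ Set.Ioi (-1:ℝ),
      HasDerivAt A (myPsi (t/(d:ℝ)+1) - myPsi (t+1)) t := by
    intro t ht
    have inner1 : HasDerivAt (fun s : ℝ => s/(d:ℝ)+1) (1/(d:ℝ)) t := by
      simpa using ((hasDerivAt_id t).div_const (d:ℝ)).add_const (1:ℝ)
    have outer1 := (hasDerivAt_logGamma (hpos1 t ht)).comp t inner1
    have part1 := outer1.const_mul (d:ℝ)
    have inner2 : HasDerivAt (fun s : ℝ => s+1) 1 t := (hasDerivAt_id t).add_const (1:ℝ)
    have outer2 := (hasDerivAt_logGamma (hpos2 t ht)).comp t inner2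
    have total := part1.sub outer2
    have : HasDerivAt A ((d:ℝ) * (myPsi (t/(d:ℝ)+1) * (1/(d:ℝ))) - myPsi (t+1) * 1) t := by
      exact total
    convert this using 1
    field_simp
  have hA2 : ∀ t ∈ Set.Ioi (-1:ℝ),
      HasDerivAt (fun s : ℝ => myPsi (s/(d:ℝ)+1) - myPsi (s+1))
        ((1/(d:ℝ)) * myTg (t/(d:ℝ)+1) - myTg (t+1)) t := by
    intro t ht
    have inner1 : HasDerivAt (fun s : ℝ => s/(d:ℝ)+1) (1/(d:ℝ)) t := by
      simpa using ((hasDerivAt_id t).div_const (d:ℝ)).add_const (1:ℝ)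
    have outer1 := (hasDerivAt_myPsi (hpos1 t ht)).comp t inner1
    have inner2 : HasDerivAt (fun s : ℝ => s+1) 1 t := (hasDerivAt_id t).add_const (1:ℝ)
    have outer2 := (hasDerivAt_myPsi (hpos2 t ht)).comp t inner2
    have total := outer1.sub outer2
    refine total.congr_deriv ?_
    ring
  have hsecond : ∀ t ∈ Set.Ioi (-1:ℝ),
      iteratedDeriv 2 A t = (1/(d:ℝ)) * myTg (t/(d:ℝ)+1) - myTg (t+1) := by
    intro t ht
    rw [iteratedDeriv_succ, iteratedDeriv_one]
    have hev : deriv A =ᶠ[nhds t] fun s => myPsi (s/(d:ℝ)+1) - myPsi (s+1) := by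
      filter_upwards [isOpen_Ioi.mem_nhds ht] with s hs using (hA1 s hs).deriv
    rw [hev.deriv_eq]
    exact (hA2 t ht).deriv
  have hneg : ∀ t : ℝ, 0 ≤ t → iteratedDeriv 2 A t < 0 := by
    intro t ht
    have hmem : t ∈ Set.Ioi (-1:ℝ) := by rw [Set.mem_Ioi]; linarith
    rw [hsecond t hmem]
    have := myTg_key d hd ht
    linarith
  refine ⟨hneg, ?_⟩
  apply strictConcaveOn_of_deriv2_neg (convex_Ici 0)
  · intro t ht
    have hmem : t ∈ Set.Ioi (-1:ℝ) := by
      rw [Set.mem_Ici] at ht; rw [Set.mem_Ioi]; linarith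
    exact (hA1 t hmem).differentiableAt.continuousAt.continuousWithinAt
  · intro x hx
    rw [interior_Ici, Set.mem_Ioi] at hx
    rw [show deriv^[2] A x = iteratedDeriv 2 A x from congrFun iteratedDeriv_eq_iterate.symm x]
    exact hneg x hx.le
end

section
/- For every integer d > 1 and every real t ≥ 0, (1/d)·ψ₁(t/d + 1) − ψ₁(t + 1) < 0, where ψ₁ is the trigamma function. -/
/-- The trigamma function, given by its series expansion `ψ₁(x) = Σ_{k≥0} 1/(x+k)²`,
valid for `x > 0`. -/
noncomputable def trigamma (x : ℝ) : ℝ := ∑' k : ℕ, 1 / (x + k) ^ 2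

lemma summable_trigamma (x : ℝ) (hx : 0 < x) :
    Summable (fun k : ℕ => 1 / (x + k) ^ 2) := by
  have h0 : Summable (fun n : ℕ => 1 / ((n : ℝ) + 1) ^ 2) := by
    have h1 : Summable (fun n : ℕ => 1 / (n : ℝ) ^ 2) :=
      Real.summable_one_div_nat_pow.2 one_lt_two
    have h2 := (summable_nat_add_iff (f := fun n : ℕ => 1 / (n : ℝ) ^ 2) 1).2 h1
    exact h2.congr fun n => by push_cast; ring
  rw [← summable_nat_add_iff 1]
  refine h0.of_nonneg_of_le (fun k => by positivity) fun k => ?_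
  apply one_div_le_one_div_of_le (by positivity)
  apply pow_le_pow_left₀ (by positivity)
  push_cast
  linarith

/-- For every integer `d > 1` and real `t ≥ 0`,
`(1/d)·ψ₁(t/d + 1) − ψ₁(t + 1) < 0`. -/
theorem trigamma_combination_neg (d : ℕ) (hd : 1 < d) (t : ℝ) (ht : 0 ≤ t) :
    (1 / d) * trigamma (t / d + 1) - trigamma (t + 1) < 0 := by
  have hdpos : 0 < d := Nat.zero_lt_of_lt hd
  have hd0 : (0 : ℝ) < d := by exact_mod_cast hdpos
  have hd1 : (1 : ℝ) < d := by exact_mod_cast hd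
  haveI : NeZero d := ⟨hdpos.ne'⟩
  set F : ℕ × Fin d → ℝ := fun p => 1 / (t + d + d * p.1) ^ 2 with hF
  set G : ℕ × Fin d → ℝ := fun p => 1 / (t + 1 + (d * p.1 + p.2)) ^ 2 with hG
  -- G is summable, being a rearrangement of the trigamma series
  have hGsum : Summable G := by
    have h := (summable_trigamma (t + 1) (by linarith)).comp_injective
      (Nat.divModEquiv d).symm.injective
    apply h.congr
    intro p
    simp only [Function.comp, hG, Nat.divModEquiv, Equiv.coe_fn_symm_mk]
    push_cast
    ring_nf
  have hFG : ∀ p, F p ≤ G p := by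
    intro ⟨k, j⟩
    have hj : (j : ℝ) + 1 ≤ (d : ℝ) := by exact_mod_cast j.is_lt
    apply one_div_le_one_div_of_le (by positivity)
    apply pow_le_pow_left₀ (by positivity)
    simp only
    have hk : (0 : ℝ) ≤ (k : ℝ) := Nat.cast_nonneg k
    nlinarith [mul_nonneg hd0.le hk]
  have hFsum : Summable F :=
    Summable.of_nonneg_of_le (fun p => by positivity) hFG hGsum
  -- the strict inequality at (0, 0)
  have hlt : F (0, ⟨0, hdpos⟩) < G (0, ⟨0, hdpos⟩) := by
    simp only [hF, hG]
    push_cast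
    apply one_div_lt_one_div_of_lt (by positivity)
    nlinarith
  have key : ∑' p, F p < ∑' p, G p := Summable.tsum_lt_tsum hFG hlt hFsum hGsum
  -- identify the two sides
  have hGeq : ∑' p, G p = trigamma (t + 1) := by
    rw [trigamma, ← (Nat.divModEquiv d).tsum_eq G]
    apply tsum_congr
    intro n
    have h : d * (n / d) + n % d = n := Nat.div_add_mod n d
    simp only [hG, Nat.divModEquiv, Equiv.coe_fn_mk, Fin.val_natCast, Fin.val_ofNat]
    rw [show ((d : ℝ) * ((n / d : ℕ) : ℝ) + ((n % d : ℕ) : ℝ))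
        = (((d * (n / d) + n % d : ℕ)) : ℝ) by push_cast; ring, h]
  have hFeq : ∑' p, F p = (1 / d) * trigamma (t / d + 1) := by
    rw [trigamma, ← tsum_mul_left, Summable.tsum_prod hFsum]
    apply tsum_congr
    intro k
    rw [tsum_fintype]
    simp only [hF, Finset.sum_const, Finset.card_univ, Fintype.card_fin, nsmul_eq_mul]
    have h1 : t / d + 1 + k = (t + d + d * k) / d := by field_simp
    have h2 : (0 : ℝ) < t + d + d * k := by positivity
    rw [h1, div_pow]
    field_simp
  rw [hFeq, hGeq] at key
  linarith
end

section
/- For real x > 0 and integer d > 1, Σ_{k=1}^∞ 1/(x/d + k)² < d · Σ_{j=1}^∞ 1/(x + j)². -/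
set_option maxHeartbeats 1000000

/-- For real `x > 0` and integer `d > 1`,
`Σ_{k=1}^∞ 1/(x/d + k)² < d · Σ_{j=1}^∞ 1/(x + j)²`. -/
theorem tsum_lt (x : ℝ) (hx : 0 < x) (d : ℕ) (hd : 1 < d) :
    ∑' k : ℕ, (1 : ℝ) / (x / (d : ℝ) + ((k : ℝ) + 1)) ^ 2 <
      (d : ℝ) * ∑' j : ℕ, (1 : ℝ) / (x + ((j : ℝ) + 1)) ^ 2 := by
  haveI : NeZero d := ⟨by omega⟩
  have hdR : (1:ℝ) < d := by exact_mod_cast hd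
  have hdR0 : (0:ℝ) < d := by linarith
  set g : ℕ → ℝ := fun j => (1:ℝ) / (x + ((j:ℝ)+1))^2 with hgdef
  have hgnn : ∀ j, 0 ≤ g j := fun j => by
    simp only [hgdef]; positivity
  have base : Summable (fun k : ℕ => (1:ℝ)/((k:ℝ)+1)^2) := by
    have h2 : Summable (fun n : ℕ => (1:ℝ)/(n:ℝ)^2) :=
      Real.summable_one_div_nat_pow.mpr (by norm_num)
    have := (summable_nat_add_iff 1).mpr h2
    simpa using this
  have hsum : ∀ c : ℝ, 0 ≤ c → Summable (fun k : ℕ => (1:ℝ)/(c + ((k:ℝ)+1))^2) := by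
    intro c hc
    refine base.of_nonneg_of_le (fun k => by positivity) (fun k => ?_)
    apply one_div_le_one_div_of_le (by positivity)
    nlinarith [Nat.cast_nonneg (α := ℝ) k]
  have hg_sum : Summable g := hsum x hx.le
  have hge : Summable (fun p : ℕ × Fin d => g ((Nat.divModEquiv d).symm p)) :=
    ((Nat.divModEquiv d).symm).summable_iff.mpr hg_sum
  -- regroup the RHS series
  have regroup : ∑' j : ℕ, g j = ∑' k : ℕ, ∑ r ∈ Finset.range d, g (k * d + r) := by
    have h1 : ∑' p : ℕ × Fin d, g ((Nat.divModEquiv d).symm p) = ∑' j : ℕ, g j :=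
      ((Nat.divModEquiv d).symm).tsum_eq g
    rw [← h1, Summable.tsum_prod' hge (fun k => Summable.of_finite)]
    congr 1
    ext k
    rw [tsum_fintype]
    simpa using Fin.sum_univ_eq_sum_range (fun r => g (k * d + r)) d
  -- key pointwise strict inequality
  have hkey : ∀ k : ℕ, (1:ℝ)/(x/(d:ℝ)+((k:ℝ)+1))^2 <
      (d:ℝ) * ∑ r ∈ Finset.range d, g (k * d + r) := by
    intro k
    have hk0 : (0:ℝ) ≤ (k:ℝ) := Nat.cast_nonneg k
    have hL : (1:ℝ)/(x/(d:ℝ)+((k:ℝ)+1))^2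
        = (d:ℝ)^2 * ((1:ℝ)/(x + (k:ℝ)*(d:ℝ) + (d:ℝ))^2) := by
      rw [eq_comm]
      have h1 : (0:ℝ) < x + (k:ℝ)*(d:ℝ) + (d:ℝ) := by nlinarith
      have h2 : (0:ℝ) < x/(d:ℝ)+((k:ℝ)+1) := by positivity
      field_simp
      ring
    have hle : ∀ r ∈ Finset.range d,
        (1:ℝ)/(x + (k:ℝ)*(d:ℝ) + (d:ℝ))^2 ≤ g (k * d + r) := by
      intro r hr
      have hr' : (r:ℝ) + 1 ≤ (d:ℝ) := by
        have := Finset.mem_range.mp hr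
        exact_mod_cast Nat.succ_le_of_lt this
      simp only [hgdef]
      push_cast
      apply one_div_le_one_div_of_le (by positivity)
      have hab : x + ((k:ℝ)*(d:ℝ) + (r:ℝ) + 1) ≤ x + (k:ℝ)*(d:ℝ) + (d:ℝ) := by linarith
      have h0 : (0:ℝ) ≤ x + ((k:ℝ)*(d:ℝ) + (r:ℝ) + 1) := by positivity
      exact pow_le_pow_left₀ h0 hab 2
    have hlt0 : (1:ℝ)/(x + (k:ℝ)*(d:ℝ) + (d:ℝ))^2 < g (k * d + 0) := by
      simp only [hgdef]
      push_cast
      apply one_div_lt_one_div_of_lt (by positivity)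
      have hab : x + ((k:ℝ)*(d:ℝ) + 0 + 1) < x + (k:ℝ)*(d:ℝ) + (d:ℝ) := by linarith
      have h0 : (0:ℝ) ≤ x + ((k:ℝ)*(d:ℝ) + 0 + 1) := by positivity
      exact pow_lt_pow_left₀ hab h0 (by norm_num)
    have hsumlt : ∑ _r ∈ Finset.range d, (1:ℝ)/(x + (k:ℝ)*(d:ℝ) + (d:ℝ))^2
        < ∑ r ∈ Finset.range d, g (k * d + r) :=
      Finset.sum_lt_sum hle ⟨0, Finset.mem_range.mpr (by omega), hlt0⟩
    rw [Finset.sum_const, Finset.card_range, nsmul_eq_mul] at hsumlt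
    rw [hL]
    calc (d:ℝ)^2 * ((1:ℝ)/(x + (k:ℝ)*(d:ℝ) + (d:ℝ))^2)
        = (d:ℝ) * ((d:ℝ) * ((1:ℝ)/(x + (k:ℝ)*(d:ℝ) + (d:ℝ))^2)) := by ring
      _ < (d:ℝ) * ∑ r ∈ Finset.range d, g (k * d + r) :=
          mul_lt_mul_of_pos_left hsumlt hdR0
  rw [show (∑' j : ℕ, (1:ℝ)/(x + ((j:ℝ)+1))^2) = ∑' j : ℕ, g j from rfl, regroup,
    ← tsum_mul_left]
  refine Summable.tsum_lt_tsum_of_nonneg (fun k => by positivity) (fun k => (hkey k).le)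
    (hkey 0) ?_
  apply Summable.mul_left
  have h2 := ((summable_prod_of_nonneg (fun p => hgnn _)).mp hge).2
  simp only [Nat.divModEquiv_symm_apply, tsum_fintype] at h2
  refine h2.congr fun k => ?_
  exact Fin.sum_univ_eq_sum_range (fun r => g (k * d + r)) d
end

section
/- Fix integers 1 ≤ a < b ≤ m with b − a ≥ 2, and let f be as above, satisfying f'(t)^{b−a} f(t)^{a−1} (1−f(t))^{m−b} = C^{b−a} on (0,1) for the constant C = B((a−1)/(b−a)+1,(m−b)/(b−a)+1). Then there exists an integer N > 0 (depending only on m, a, b) such that for all t ∈ (0,1), 1/(f'(t))^{b−a−1} ≥ t^N (1−t)^N. -/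
set_option maxHeartbeats 1000000


/-- Fix integers `1 ≤ a < b ≤ m` with `b − a ≥ 2`, and let `f` be the inverse of
`g(t) = (1/B) ∫₀ᵗ u^{(a−1)/(b−a)}(1−u)^{(m−b)/(b−a)} du`.  Then there is an integer
`N > 0` (depending only on `m, a, b`) such that for all `t ∈ (0,1)`,
`1/(f'(t))^{b−a−1} ≥ t^N (1−t)^N`. -/
theorem polybound (a b m : ℕ) (h1 : 1 ≤ a) (hab : a < b) (hbm : b ≤ m) (hba : 2 ≤ b - a)
    (B : ℝ)
    (hB : B = ∫ u in (0:ℝ)..1,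
      u ^ (((a:ℝ) - 1) / ((b:ℝ) - a)) * (1 - u) ^ (((m:ℝ) - b) / ((b:ℝ) - a)))
    (g : ℝ → ℝ)
    (hg : ∀ t : ℝ, g t = (1 / B) * ∫ u in (0:ℝ)..t,
      u ^ (((a:ℝ) - 1) / ((b:ℝ) - a)) * (1 - u) ^ (((m:ℝ) - b) / ((b:ℝ) - a)))
    (f f' : ℝ → ℝ)
    (hmaps : Set.MapsTo f (Set.Icc (0:ℝ) 1) (Set.Icc (0:ℝ) 1))
    (hfg : ∀ t ∈ Set.Icc (0:ℝ) 1, f (g t) = t)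
    (hgf : ∀ t ∈ Set.Icc (0:ℝ) 1, g (f t) = t)
    (hderiv : ∀ t ∈ Set.Ioo (0:ℝ) 1, HasDerivAt f (f' t) t) :
    ∃ N : ℕ, 0 < N ∧ ∀ t ∈ Set.Ioo (0:ℝ) 1,
      t ^ N * (1 - t) ^ N ≤ 1 / (f' t) ^ (b - a - 1) := by
  have hba' : (0:ℝ) < (b:ℝ) - (a:ℝ) := by
    have : (a:ℝ) < (b:ℝ) := by exact_mod_cast hab
    linarith
  set α : ℝ := ((a:ℝ) - 1) / ((b:ℝ) - a) with hα_def
  set β : ℝ := ((m:ℝ) - b) / ((b:ℝ) - a) with hβ_def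
  have hα0 : 0 ≤ α := by
    apply div_nonneg _ hba'.le
    have : (1:ℝ) ≤ (a:ℝ) := by exact_mod_cast h1
    linarith
  have hβ0 : 0 ≤ β := by
    apply div_nonneg _ hba'.le
    have : (b:ℝ) ≤ (m:ℝ) := by exact_mod_cast hbm
    linarith
  set F : ℝ → ℝ := fun u => u ^ α * (1 - u) ^ β with hF_def
  have hFcont : Continuous F := by
    apply (Real.continuous_rpow_const hα0).mul
    exact (Real.continuous_rpow_const hβ0).comp (continuous_const.sub continuous_id)
  have hFint : ∀ x y : ℝ, IntervalIntegrable F MeasureTheory.volume x y := fun x y =>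
    hFcont.intervalIntegrable x y
  have hFpos : ∀ u ∈ Set.Ioo (0:ℝ) 1, 0 < F u := by
    intro u hu
    exact mul_pos (Real.rpow_pos_of_pos hu.1 _) (Real.rpow_pos_of_pos (by linarith [hu.2]) _)
  have hFle1 : ∀ u ∈ Set.Icc (0:ℝ) 1, F u ≤ 1 := by
    intro u hu
    have := Real.rpow_le_one hu.1 hu.2 hα0
    have := Real.rpow_le_one (by linarith [hu.2] : (0:ℝ) ≤ 1 - u) (by linarith [hu.1]) hβ0
    have hnn : 0 ≤ (1 - u) ^ β := Real.rpow_nonneg (by linarith [hu.2]) _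
    calc F u ≤ 1 * 1 := by
          apply mul_le_mul (Real.rpow_le_one hu.1 hu.2 hα0)
            (Real.rpow_le_one (by linarith [hu.2]) (by linarith [hu.1]) hβ0) hnn zero_le_one
      _ = 1 := by ring
  have hBF : B = ∫ u in (0:ℝ)..1, F u := hB
  have hBpos : 0 < B := by
    rw [hBF]
    exact intervalIntegral.intervalIntegral_pos_of_pos_on (hFint 0 1) hFpos one_pos
  have hBle1 : B ≤ 1 := by
    rw [hBF]
    calc (∫ u in (0:ℝ)..1, F u) ≤ ∫ _u in (0:ℝ)..1, (1:ℝ) :=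
          intervalIntegral.integral_mono_on zero_le_one (hFint 0 1)
            intervalIntegrable_const hFle1
      _ = 1 := by simp
  -- f maps (0,1) into (0,1)
  have hg0 : g 0 = 0 := by rw [hg]; simp
  have hg1 : g 1 = 1 := by
    rw [hg, ← hBF]
    field_simp
  have hft : ∀ t ∈ Set.Ioo (0:ℝ) 1, f t ∈ Set.Ioo (0:ℝ) 1 := by
    intro t ht
    have htIcc : t ∈ Set.Icc (0:ℝ) 1 := Set.Ioo_subset_Icc_self ht
    have hmem := hmaps htIcc
    have hgfv := hgf t htIcc
    constructor
    · rcases lt_or_eq_of_le hmem.1 with h | h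
      · exact h
      · exfalso; rw [← h] at hgfv; rw [hg0] at hgfv; linarith [ht.1]
    · rcases lt_or_eq_of_le hmem.2 with h | h
      · exact h
      · exfalso; rw [h] at hgfv; rw [hg1] at hgfv; linarith [ht.2]
  -- derivative of g
  have hgfun : g = fun y => (1 / B) * ∫ u in (0:ℝ)..y, F u := funext hg
  have hgderiv : ∀ x : ℝ, HasDerivAt g ((1 / B) * F x) x := by
    intro x
    have h0 : HasDerivAt (fun y => ∫ u in (0:ℝ)..y, F u) (F x) x :=
      intervalIntegral.integral_hasDerivAt_right (hFint 0 x)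
        (hFcont.stronglyMeasurableAtFilter _ _) hFcont.continuousAt
    rw [hgfun]
    exact h0.const_mul (1 / B)
  -- key identity for f'
  have hkey : ∀ t ∈ Set.Ioo (0:ℝ) 1, (1 / B) * F (f t) * f' t = 1 := by
    intro t ht
    have hcomp : HasDerivAt (g ∘ f) ((1 / B) * F (f t) * f' t) t :=
      (hgderiv (f t)).comp t (hderiv t ht)
    have hev : (id : ℝ → ℝ) =ᶠ[nhds t] g ∘ f := by
      filter_upwards [Ioo_mem_nhds ht.1 ht.2] with x hx
      exact (hgf x (Set.Ioo_subset_Icc_self hx)).symm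
    have hid : HasDerivAt (id : ℝ → ℝ) ((1 / B) * F (f t) * f' t) t :=
      hcomp.congr_of_eventuallyEq hev
    exact hid.unique (hasDerivAt_id t)
  -- choose the exponent
  set A : ℕ := ⌈α⌉₊ with hA_def
  set D : ℕ := ⌈β⌉₊ with hD_def
  set k : ℕ := b - a - 1 with hk_def
  have hk1 : 1 ≤ k := by omega
  obtain ⟨s₀, hs₀⟩ := pow_unbounded_of_one_lt ((1 / B) ^ ((A + D) * k)) (by norm_num : (1:ℝ) < 4)
  set s : ℕ := s₀ + 1 with hs_def
  have hs : (1 / B) ^ ((A + D) * k) ≤ (4:ℝ) ^ s := by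
    refine hs₀.le.trans (pow_le_pow_right₀ (by norm_num) (Nat.le_succ _))
  have hquarter : ((1:ℝ) / 4) ^ s ≤ B ^ ((A + D) * k) := by
    have hBM : (0:ℝ) < B ^ ((A + D) * k) := pow_pos hBpos _
    rw [div_pow, one_pow] at hs ⊢
    rw [div_le_iff₀ (by positivity : (0:ℝ) < (4:ℝ) ^ s)]
    rw [div_le_iff₀ hBM] at hs
    nlinarith
  refine ⟨(A + D) * k + s, by omega, ?_⟩
  intro t ht
  have htIcc : t ∈ Set.Icc (0:ℝ) 1 := Set.Ioo_subset_Icc_self ht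
  have hftm := hft t ht
  have hFftpos : 0 < F (f t) := hFpos _ hftm
  have hkeyt := hkey t ht
  have hf'pos : 0 < f' t := by
    by_contra hcon
    push_neg at hcon
    nlinarith [mul_nonpos_of_nonneg_of_nonpos
      (by positivity : (0:ℝ) ≤ (1 / B) * F (f t)) hcon]
  have hf'eq : f' t = B / F (f t) := by
    rw [eq_div_iff hFftpos.ne']
    field_simp at hkeyt
    linarith
  -- lower bounds on f t and 1 - f t
  have hgft : t = (1 / B) * ∫ u in (0:ℝ)..(f t), F u := by
    rw [← hg (f t)]
    exact (hgf t htIcc).symm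
  have hBt : B * t ≤ f t := by
    have h1 : (∫ u in (0:ℝ)..(f t), F u) ≤ f t := by
      calc (∫ u in (0:ℝ)..(f t), F u) ≤ ∫ _u in (0:ℝ)..(f t), (1:ℝ) :=
            intervalIntegral.integral_mono_on hftm.1.le (hFint _ _) intervalIntegrable_const
              (fun x hx => hFle1 x ⟨hx.1, hx.2.trans hftm.2.le⟩)
        _ = f t := by simp
    have h2 : B * t = ∫ u in (0:ℝ)..(f t), F u := by
      have h3 := hgft
      field_simp [hBpos.ne'] at h3
      linarith
    linarith
  have hB1t : B * (1 - t) ≤ 1 - f t := by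
    have hsplit : (∫ u in (0:ℝ)..(f t), F u) + ∫ u in (f t)..1, F u = ∫ u in (0:ℝ)..1, F u :=
      intervalIntegral.integral_add_adjacent_intervals (hFint _ _) (hFint _ _)
    have h1 : (∫ u in (f t)..1, F u) ≤ 1 - f t := by
      calc (∫ u in (f t)..1, F u) ≤ ∫ _u in (f t)..1, (1:ℝ) :=
            intervalIntegral.integral_mono_on hftm.2.le (hFint _ _) intervalIntegrable_const
              (fun x hx => hFle1 x ⟨hftm.1.le.trans hx.1, hx.2⟩)
        _ = 1 - f t := by simp
    have h2 : B * t = ∫ u in (0:ℝ)..(f t), F u := by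
      have h3 := hgft
      field_simp [hBpos.ne'] at h3
      linarith
    have h3 : B * (1 - t) = ∫ u in (f t)..1, F u := by
      rw [← hBF] at hsplit
      rw [mul_sub, mul_one, h2]
      linarith
    linarith
  have hBtpos : 0 < B * t := mul_pos hBpos ht.1
  have hB1tpos : 0 < B * (1 - t) := mul_pos hBpos (by linarith [ht.2])
  have hBtle1 : B * t ≤ 1 := by
    have := mul_le_mul hBle1 ht.2.le ht.1.le zero_le_one
    linarith
  have hB1tle1 : B * (1 - t) ≤ 1 := by
    have := mul_le_mul hBle1 (by linarith [ht.1] : 1 - t ≤ 1) (by linarith [ht.2]) zero_le_one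
    linarith
  -- lower bound on F (f t)
  have e1 : (B * t) ^ A ≤ (f t) ^ α := by
    calc (B * t) ^ A = (B * t) ^ (A : ℝ) := (Real.rpow_natCast _ _).symm
      _ ≤ (B * t) ^ α := Real.rpow_le_rpow_of_exponent_ge hBtpos hBtle1 (Nat.le_ceil α)
      _ ≤ (f t) ^ α := Real.rpow_le_rpow hBtpos.le hBt hα0
  have e2 : (B * (1 - t)) ^ D ≤ (1 - f t) ^ β := by
    calc (B * (1 - t)) ^ D = (B * (1 - t)) ^ (D : ℝ) := (Real.rpow_natCast _ _).symm
      _ ≤ (B * (1 - t)) ^ β := Real.rpow_le_rpow_of_exponent_ge hB1tpos hB1tle1 (Nat.le_ceil β)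
      _ ≤ (1 - f t) ^ β := Real.rpow_le_rpow hB1tpos.le hB1t hβ0
  have hFlow : (B * t) ^ A * (B * (1 - t)) ^ D ≤ F (f t) :=
    mul_le_mul e1 e2 (by positivity) (Real.rpow_nonneg hftm.1.le _)
  have hPpos : 0 < (B * t) ^ A * (B * (1 - t)) ^ D := by positivity
  have hf'le : f' t ≤ B / ((B * t) ^ A * (B * (1 - t)) ^ D) := by
    rw [hf'eq]
    exact div_le_div_of_nonneg_left hBpos.le hPpos hFlow |>.trans_eq rfl
  -- final computation
  have step1 : (f' t) ^ k ≤ (B / ((B * t) ^ A * (B * (1 - t)) ^ D)) ^ k :=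
    pow_le_pow_left₀ hf'pos.le hf'le k
  have b1 : t ^ (D * k) ≤ 1 := pow_le_one₀ ht.1.le ht.2.le
  have b2 : (1 - t) ^ (A * k) ≤ 1 := pow_le_one₀ (by linarith [ht.2]) (by linarith [ht.1])
  have b3 : (t * (1 - t)) ^ s ≤ ((1:ℝ) / 4) ^ s := by
    apply pow_le_pow_left₀ (by nlinarith [ht.1, ht.2]) _ s
    nlinarith [sq_nonneg (t - 1/2)]
  have b4 : B ^ k ≤ 1 := pow_le_one₀ hBpos.le hBle1
  have core : t ^ (D * k) * (1 - t) ^ (A * k) * (t * (1 - t)) ^ s * B ^ k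
      ≤ B ^ ((A + D) * k) := by
    have hnn1 : (0:ℝ) ≤ t ^ (D * k) := pow_nonneg ht.1.le _
    have hnn2 : (0:ℝ) ≤ (1 - t) ^ (A * k) := pow_nonneg (by linarith [ht.2]) _
    have hnn3 : (0:ℝ) ≤ (t * (1 - t)) ^ s :=
      pow_nonneg (mul_nonneg ht.1.le (by linarith [ht.2])) _
    calc t ^ (D * k) * (1 - t) ^ (A * k) * (t * (1 - t)) ^ s * B ^ k
        ≤ 1 * 1 * ((1:ℝ)/4) ^ s * 1 := by
          apply mul_le_mul _ b4 (pow_nonneg hBpos.le _) (by norm_num)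
          apply mul_le_mul _ b3 hnn3 (by norm_num)
          exact mul_le_mul b1 b2 hnn2 zero_le_one
      _ = ((1:ℝ)/4) ^ s := by ring
      _ ≤ B ^ ((A + D) * k) := hquarter
  have main : t ^ ((A + D) * k + s) * (1 - t) ^ ((A + D) * k + s) * B ^ k
      ≤ ((B * t) ^ A * (B * (1 - t)) ^ D) ^ k := by
    have expand : t ^ ((A + D) * k + s) * (1 - t) ^ ((A + D) * k + s) * B ^ k
        = (t ^ (A * k) * (1 - t) ^ (D * k)) *
          (t ^ (D * k) * (1 - t) ^ (A * k) * (t * (1 - t)) ^ s * B ^ k) := by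
      rw [add_mul, pow_add, pow_add, pow_add, pow_add, mul_pow]
      ring
    have expand2 : ((B * t) ^ A * (B * (1 - t)) ^ D) ^ k
        = (t ^ (A * k) * (1 - t) ^ (D * k)) * B ^ ((A + D) * k) := by
      rw [mul_pow B t A, mul_pow B (1 - t) D]
      ring
    rw [expand, expand2]
    exact mul_le_mul_of_nonneg_left core
      (mul_nonneg (pow_nonneg ht.1.le _) (pow_nonneg (by linarith [ht.2]) _))
  have step2 : t ^ ((A + D) * k + s) * (1 - t) ^ ((A + D) * k + s)
      ≤ ((B * t) ^ A * (B * (1 - t)) ^ D) ^ k / B ^ k := by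
    rw [le_div_iff₀ (pow_pos hBpos k)]
    exact main
  calc t ^ ((A + D) * k + s) * (1 - t) ^ ((A + D) * k + s)
      ≤ ((B * t) ^ A * (B * (1 - t)) ^ D) ^ k / B ^ k := step2
    _ = 1 / ((B / ((B * t) ^ A * (B * (1 - t)) ^ D)) ^ k) := by
        rw [div_pow, one_div_div]
    _ ≤ 1 / (f' t) ^ k := one_div_le_one_div_of_le (pow_pos hf'pos k) step1
end

section
/- Fix an integer d > 1 and an integer m. The function t ↦ c(m, t, t+d) defined by c(m,t,t+d) = A(t−1) + A(m−t−d) + K, where A(s) = d·log Γ(s/d + 1) − log Γ(s+1) and K is a constant independent of t, is strictly concave in t and symmetric about t = (m−d+1)/2; hence for real numbers 1 ≤ t < t' with t' ≤ (m−d+1)/2, we have c(m,t,t+d) < c(m,t',t'+d). -/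
open Real Filter Finset Topology

section Aux

lemma hasDerivAt_log_shift (a x : ℝ) (h : x + a ≠ 0) :
    HasDerivAt (fun y => Real.log (y + a)) (x + a)⁻¹ x := by
  simpa [Function.comp_def] using (Real.hasDerivAt_log h).comp x ((hasDerivAt_id x).add_const a)

lemma hasDerivAt_inv_shift (a x : ℝ) (h : x + a ≠ 0) :
    HasDerivAt (fun y => (y + a)⁻¹) (-((x + a) ^ 2)⁻¹) x := by
  simpa [Function.comp_def] using (hasDerivAt_inv h).comp x ((hasDerivAt_id x).add_const a)

lemma atom_deriv (a b : ℝ) (ha : 0 < a) (hb : 0 < b) :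
    ∀ x ∈ Set.Ioi (0:ℝ), deriv (fun y => Real.log (y + a) - Real.log (y + b)) x
      = (x + a)⁻¹ - (x + b)⁻¹ := by
  intro x hx
  have hxa : x + a ≠ 0 := by simp at hx; positivity
  have hxb : x + b ≠ 0 := by simp at hx; positivity
  exact ((hasDerivAt_log_shift a x hxa).sub (hasDerivAt_log_shift b x hxb)).deriv

lemma atom_deriv2 (a b : ℝ) (ha : 0 < a) (hb : 0 < b) :
    ∀ x ∈ Set.Ioi (0:ℝ), deriv^[2] (fun y => Real.log (y + a) - Real.log (y + b)) x
      = -((x + a) ^ 2)⁻¹ + ((x + b) ^ 2)⁻¹ := by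
  intro x hx
  have hev : deriv (fun y => Real.log (y + a) - Real.log (y + b))
      =ᶠ[nhds x] fun y => (y + a)⁻¹ - (y + b)⁻¹ := by
    filter_upwards [isOpen_Ioi.mem_nhds hx] with y hy
    exact atom_deriv a b ha hb y hy
  have hxa : x + a ≠ 0 := by simp at hx; positivity
  have hxb : x + b ≠ 0 := by simp at hx; positivity
  rw [Function.iterate_succ, Function.iterate_one, Function.comp_apply, hev.deriv_eq]
  have := ((hasDerivAt_inv_shift a x hxa).sub (hasDerivAt_inv_shift b x hxb)).deriv
  rw [show (fun y => (y + a)⁻¹ - (y + b)⁻¹) = ((fun y => (y + a)⁻¹) - fun y => (y + b)⁻¹) from rfl,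
    this]; ring

lemma atom_concaveOn (a b : ℝ) (ha : 0 < a) (hab : a ≤ b) :
    ConcaveOn ℝ (Set.Ici 0) (fun y => Real.log (y + a) - Real.log (y + b)) := by
  have hb : 0 < b := lt_of_lt_of_le ha hab
  have hcont : ContinuousOn (fun y => Real.log (y + a) - Real.log (y + b)) (Set.Ici 0) := by
    intro x hx
    have hxa : x + a ≠ 0 := by simp at hx; positivity
    have hxb : x + b ≠ 0 := by simp at hx; positivity
    exact (((hasDerivAt_log_shift a x hxa).sub
      (hasDerivAt_log_shift b x hxb)).continuousAt).continuousWithinAt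
  refine concaveOn_of_deriv2_nonpos (convex_Ici 0) hcont ?_ ?_ ?_
  · rw [interior_Ici]
    intro x hx
    have hxa : x + a ≠ 0 := by simp at hx; positivity
    have hxb : x + b ≠ 0 := by simp at hx; positivity
    exact (((hasDerivAt_log_shift a x hxa).sub
      (hasDerivAt_log_shift b x hxb)).differentiableAt).differentiableWithinAt
  · rw [interior_Ici]
    intro x hx
    have hxa : x + a ≠ 0 := by simp at hx; positivity
    have hxb : x + b ≠ 0 := by simp at hx; positivity
    have hev : deriv (fun y => Real.log (y + a) - Real.log (y + b))
        =ᶠ[nhds x] fun y => (y + a)⁻¹ - (y + b)⁻¹ := by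
      filter_upwards [isOpen_Ioi.mem_nhds hx] with y hy
      exact atom_deriv a b ha hb y hy
    refine DifferentiableAt.differentiableWithinAt ?_
    exact hev.differentiableAt_iff.mpr
      ((hasDerivAt_inv_shift a x hxa).sub (hasDerivAt_inv_shift b x hxb)).differentiableAt
  · rw [interior_Ici]
    intro x hx
    rw [atom_deriv2 a b ha hb x hx]
    have h1 : (0:ℝ) < x + a := by simp at hx; positivity
    have h2 : ((x + b) ^ 2)⁻¹ ≤ ((x + a) ^ 2)⁻¹ := by
      have h4 : (x+a)^2 ≤ (x+b)^2 := by nlinarith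
      have h3 : (0:ℝ) < (x+a)^2 := by positivity
      exact inv_anti₀ h3 h4
    linarith

lemma atom_strictConcaveOn (a b : ℝ) (ha : 0 < a) (hab : a < b) :
    StrictConcaveOn ℝ (Set.Ici 0) (fun y => Real.log (y + a) - Real.log (y + b)) := by
  have hb : 0 < b := lt_trans ha hab
  have hcont : ContinuousOn (fun y => Real.log (y + a) - Real.log (y + b)) (Set.Ici 0) := by
    intro x hx
    have hxa : x + a ≠ 0 := by simp at hx; positivity
    have hxb : x + b ≠ 0 := by simp at hx; positivity
    exact (((hasDerivAt_log_shift a x hxa).sub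
      (hasDerivAt_log_shift b x hxb)).continuousAt).continuousWithinAt
  refine strictConcaveOn_of_deriv2_neg (convex_Ici 0) hcont ?_
  rw [interior_Ici]
  intro x hx
  rw [atom_deriv2 a b ha hb x hx]
  have h1 : (0:ℝ) < x + a := by simp at hx; positivity
  have h2 : ((x + b) ^ 2)⁻¹ < ((x + a) ^ 2)⁻¹ := by
    have h4 : (x+a)^2 < (x+b)^2 := by nlinarith
    have h3 : (0:ℝ) < (x+a)^2 := by positivity
    exact inv_strictAnti₀ h3 h4
  linarith

lemma concaveOn_finset_sum {ι : Type*} (t : Finset ι) {S : Set ℝ} (hS : Convex ℝ S)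
    {f : ι → ℝ → ℝ} (h : ∀ i ∈ t, ConcaveOn ℝ S (f i)) :
    ConcaveOn ℝ S (fun x => ∑ i ∈ t, f i x) := by
  induction t using Finset.cons_induction with
  | empty => simpa using concaveOn_const 0 hS
  | cons i t hi ih =>
    simp only [Finset.sum_cons]
    exact (h i (Finset.mem_cons_self _ _)).add
      (ih fun j hj => h j (Finset.mem_cons.2 (Or.inr hj)))

lemma concaveOn_affine {S : Set ℝ} (hS : Convex ℝ S) (α β : ℝ) :
    ConcaveOn ℝ S (fun x => α * x + β) := by
  refine ⟨hS, fun x hx y hy a b ha hb hab => le_of_eq ?_⟩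
  simp only [smul_eq_mul]
  linear_combination β * hab

lemma sum_range_mul_div (d n : ℕ) (hd : 0 < d) (f : ℕ → ℝ) :
    ∑ j ∈ Finset.range (d * n), f (j / d) = d * ∑ k ∈ Finset.range n, f k := by
  induction n with
  | zero => simp
  | succ n ih =>
    rw [Nat.mul_succ, Finset.sum_range_succ, mul_add, ← ih, Finset.sum_range_add]
    congr 1
    rw [Finset.sum_congr rfl (fun i hi => ?_), Finset.sum_const, Finset.card_range,
      nsmul_eq_mul]
    rw [Nat.mul_add_div hd, Nat.div_eq_of_lt (Finset.mem_range.1 hi), Nat.add_zero]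

lemma log_gammaSeq (x : ℝ) (hx : 0 < x) (n : ℕ) (hn : 1 ≤ n) :
    Real.log (Real.GammaSeq x n)
      = x * Real.log n + Real.log (n.factorial : ℝ)
        - ∑ j ∈ Finset.range (n + 1), Real.log (x + j) := by
  have hn0 : (0:ℝ) < n := by exact_mod_cast hn
  have hfac : ((n.factorial : ℕ) : ℝ) ≠ 0 := by positivity
  have hprod : ∀ j ∈ Finset.range (n + 1), x + (j:ℝ) ≠ 0 := by
    intro j _; positivity
  rw [Real.GammaSeq, Real.log_div (by positivity) (Finset.prod_ne_zero_iff.2 hprod),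
    Real.log_mul (by positivity) hfac, Real.log_rpow hn0, Real.log_prod hprod]

lemma b_repr (d : ℕ) (hd : 1 < d) (n : ℕ) :
    ∃ α β : ℝ, ∀ s : ℝ, 0 ≤ s →
      (d:ℝ) * Real.log (Real.GammaSeq (s/d + 1) (n+1))
        - Real.log (Real.GammaSeq (s+1) (d*(n+2) - 1))
      = α * s + β + ∑ j ∈ Finset.range (d*(n+2)),
          (Real.log (s + ((j+1:ℕ):ℝ)) - Real.log (s + ((d*(j/d) + d : ℕ):ℝ))) := by
  have hd0 : (0:ℝ) < d := by exact_mod_cast Nat.lt_of_lt_of_le Nat.zero_lt_one hd.le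
  have hdn : 2 ≤ d * (n+2) := by
    have h2 : 2 * (n+2) ≤ d * (n+2) := Nat.mul_le_mul_right _ hd
    omega
  have hN1 : d*(n+2) - 1 + 1 = d*(n+2) := by omega
  refine ⟨Real.log ((n+1:ℕ)) - Real.log ((d*(n+2) - 1 : ℕ)),
      (d:ℝ) * Real.log ((n+1:ℕ)) + d * Real.log ((n+1).factorial : ℝ)
        + (d:ℝ)*(n+2)*Real.log d
        - Real.log ((d*(n+2)-1 : ℕ)) - Real.log (((d*(n+2)-1).factorial : ℕ) : ℝ), ?_⟩
  intro s hs
  have hx1 : 0 < s/d + 1 := by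
    have := div_nonneg hs hd0.le; linarith
  have hx2 : 0 < s + 1 := by linarith
  rw [log_gammaSeq _ hx1 (n+1) (by omega), log_gammaSeq _ hx2 _ (by omega), hN1]
  have hterm : ∀ k : ℕ, Real.log (s/d + 1 + (k:ℝ))
      = Real.log (s + ((d*k+d : ℕ):ℝ)) - Real.log d := by
    intro k
    have hc : (0:ℝ) < ((d*k+d : ℕ):ℝ) := by
      have : 0 < d*k+d := by positivity
      exact_mod_cast this
    have harg : s/d + 1 + (k:ℝ) = (s + ((d*k+d:ℕ):ℝ))/d := by
      push_cast
      rw [eq_div_iff (ne_of_gt hd0)]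
      field_simp
      ring
    rw [harg, Real.log_div (by linarith) (ne_of_gt hd0)]
  have hS1 : ∑ k ∈ Finset.range (n+1+1), Real.log (s/d + 1 + (k:ℝ))
      = (∑ k ∈ Finset.range (n+2), Real.log (s + ((d*k+d : ℕ):ℝ))) - (n+2) * Real.log d := by
    rw [Finset.sum_congr rfl (fun k _ => hterm k), Finset.sum_sub_distrib,
      Finset.sum_const, Finset.card_range, nsmul_eq_mul]
    push_cast
    ring
  have hgroup : ∑ j ∈ Finset.range (d*(n+2)), Real.log (s + ((d*(j/d)+d : ℕ):ℝ))
      = (d:ℝ) * ∑ k ∈ Finset.range (n+2), Real.log (s + ((d*k+d : ℕ):ℝ)) :=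
    sum_range_mul_div d (n+2) (by omega) (fun k => Real.log (s + ((d*k+d : ℕ):ℝ)))
  have hS2 : ∑ j ∈ Finset.range (d*(n+2)), Real.log (s + 1 + (j:ℝ))
      = ∑ j ∈ Finset.range (d*(n+2)), Real.log (s + ((j+1:ℕ):ℝ)) := by
    refine Finset.sum_congr rfl fun j _ => ?_
    rw [show s + 1 + (j:ℝ) = s + ((j+1:ℕ):ℝ) by push_cast; ring]
  rw [hS1, hS2, Finset.sum_sub_distrib, hgroup]
  have hds : (d:ℝ) * (s/d) = s := by field_simp
  linear_combination Real.log ((n+1:ℕ) : ℝ) * hds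

lemma A_strictConcaveOn (d : ℕ) (hd : 1 < d) :
    StrictConcaveOn ℝ (Set.Ici 0)
      (fun s : ℝ => (d:ℝ) * Real.log (Real.Gamma (s/d + 1)) - Real.log (Real.Gamma (s + 1))) := by
  have hd0 : (0:ℝ) < d := by exact_mod_cast Nat.lt_of_lt_of_le Nat.zero_lt_one hd.le
  set A : ℝ → ℝ :=
    fun s => (d:ℝ) * Real.log (Real.Gamma (s/d + 1)) - Real.log (Real.Gamma (s + 1)) with hAdef
  set φ : ℝ → ℝ := fun s => Real.log (s + 1) - Real.log (s + (d:ℝ)) with hφdef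
  have hφ : StrictConcaveOn ℝ (Set.Ici 0) φ :=
    atom_strictConcaveOn 1 d one_pos (by exact_mod_cast hd)
  suffices h : ConcaveOn ℝ (Set.Ici 0) (fun s => A s - φ s) by
    have h2 := hφ.add_concaveOn h
    have h3 : A = φ + fun s => A s - φ s := by funext s; simp
    rw [hAdef] at h3 ⊢
    rw [h3]
    exact h2
  choose α β hrep using b_repr d hd
  set atom : ℕ → ℝ → ℝ := fun j s =>
    Real.log (s + ((j+1:ℕ):ℝ)) - Real.log (s + ((d*(j/d) + d : ℕ):ℝ)) with hatomdef
  have hatom : ∀ j, ConcaveOn ℝ (Set.Ici 0) (atom j) := by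
    intro j
    have h1 : (0:ℝ) < ((j+1:ℕ):ℝ) := by exact_mod_cast j.succ_pos
    have h2 : ((j+1:ℕ):ℝ) ≤ ((d*(j/d)+d : ℕ):ℝ) := by
      have hdm := Nat.div_add_mod j d
      have hm : j % d < d := Nat.mod_lt _ (by omega)
      exact_mod_cast (by omega : j+1 ≤ d*(j/d)+d)
    exact atom_concaveOn _ _ h1 h2
  have hG : ∀ n, ConcaveOn ℝ (Set.Ici 0)
      (fun s => (α n * s + β n) + ∑ j ∈ Finset.Ico 1 (d*(n+2)), atom j s) := fun n =>
    (concaveOn_affine (convex_Ici 0) (α n) (β n)).add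
      (concaveOn_finset_sum _ (convex_Ici 0) (fun j _ => hatom j))
  have hdn : ∀ n : ℕ, 2 ≤ d * (n+2) := by
    intro n
    have h2 : 2 * (n+2) ≤ d * (n+2) := Nat.mul_le_mul_right _ hd
    omega
  have hatom0 : ∀ s : ℝ, atom 0 s = φ s := by
    intro s
    simp [hatomdef, hφdef, Nat.zero_div]
  have hGeq : ∀ n, ∀ s : ℝ, 0 ≤ s →
      (α n * s + β n) + ∑ j ∈ Finset.Ico 1 (d*(n+2)), atom j s
        = ((d:ℝ) * Real.log (Real.GammaSeq (s/d + 1) (n+1))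
            - Real.log (Real.GammaSeq (s+1) (d*(n+2) - 1))) - φ s := by
    intro n s hs
    rw [hrep n s hs, Finset.sum_range_eq_add_Ico _ (by have := hdn n; omega)]
    simp only [hatomdef, hφdef, Nat.zero_div, Nat.mul_zero, Nat.zero_add, Nat.cast_one,
      Nat.zero_add]
    norm_num
    ring
  have hlim : ∀ z : ℝ, z ∈ Set.Ici 0 →
      Tendsto (fun n => (α n * z + β n) + ∑ j ∈ Finset.Ico 1 (d*(n+2)), atom j z) atTop
        (𝓝 (A z - φ z)) := by
    intro z hz
    have hz' : (0:ℝ) ≤ z := hz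
    have h1 : Tendsto (fun n => Real.GammaSeq (z/d + 1) (n+1)) atTop
        (𝓝 (Real.Gamma (z/d + 1))) :=
      (Real.GammaSeq_tendsto_Gamma _).comp (tendsto_add_atTop_nat 1)
    have h2' : Tendsto (fun n : ℕ => d*(n+2) - 1) atTop atTop := by
      refine tendsto_atTop_atTop.2 fun c => ⟨c, fun n hn => ?_⟩
      have h3 : 2*(n+2) ≤ d*(n+2) := Nat.mul_le_mul_right _ hd
      omega
    have h2 : Tendsto (fun n => Real.GammaSeq (z+1) (d*(n+2) - 1)) atTop
        (𝓝 (Real.Gamma (z+1))) :=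
      (Real.GammaSeq_tendsto_Gamma _).comp h2'
    have hzd : 0 < z/d + 1 := by
      have := div_nonneg hz' hd0.le; linarith
    have hg1 : Real.Gamma (z/d + 1) ≠ 0 := ne_of_gt (Real.Gamma_pos_of_pos hzd)
    have hg2 : Real.Gamma (z+1) ≠ 0 := ne_of_gt (Real.Gamma_pos_of_pos (by linarith))
    have hbt : Tendsto (fun n => (d:ℝ) * Real.log (Real.GammaSeq (z/d + 1) (n+1))
        - Real.log (Real.GammaSeq (z+1) (d*(n+2) - 1))) atTop (𝓝 (A z)) :=
      ((h1.log hg1).const_mul _).sub (h2.log hg2)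
    exact (hbt.sub_const (φ z)).congr fun n => (hGeq n z hz').symm
  refine ⟨convex_Ici 0, fun x hx y hy a b ha hb hab => ?_⟩
  have hxy : a • x + b • y ∈ Set.Ici 0 := (convex_Ici 0) hx hy ha hb hab
  refine le_of_tendsto_of_tendsto'
    (((hlim x hx).const_mul a).add ((hlim y hy).const_mul b)) (hlim _ hxy) fun n => ?_
  have := (hG n).2 hx hy ha hb hab
  simpa [smul_eq_mul] using this

end Aux

/-- Fix an integer `d > 1` and an integer `m`.  The function
`t ↦ c(m,t,t+d) = A(t−1) + A(m−t−d) + K`, where `A(s) = d·log Γ(s/d+1) − log Γ(s+1)` and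
`K` is a constant, is strictly concave (on `[1, m−d]`) and symmetric about `t = (m−d+1)/2`;
hence for `1 ≤ t < t' ≤ (m−d+1)/2`, `c(m,t,t+d) < c(m,t',t'+d)`. -/
theorem c_concave_symmetric_mono (d : ℕ) (hd : 1 < d) (m : ℤ) (K : ℝ)
    (A : ℝ → ℝ)
    (hA : ∀ s : ℝ, A s = d * Real.log (Real.Gamma (s / d + 1)) - Real.log (Real.Gamma (s + 1)))
    (c : ℝ → ℝ)
    (hc : ∀ t : ℝ, c t = A (t - 1) + A ((m : ℝ) - t - d) + K) :
    StrictConcaveOn ℝ (Set.Icc 1 ((m : ℝ) - d)) c ∧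
      (∀ t : ℝ, c t = c ((m : ℝ) - d + 1 - t)) ∧
      ∀ t t' : ℝ, 1 ≤ t → t < t' → t' ≤ ((m : ℝ) - d + 1) / 2 → c t < c t' := by
  have hSA : StrictConcaveOn ℝ (Set.Ici 0) A := by
    have := A_strictConcaveOn d hd
    have hAe : A = fun s : ℝ =>
        (d:ℝ) * Real.log (Real.Gamma (s/d + 1)) - Real.log (Real.Gamma (s + 1)) :=
      funext hA
    rw [hAe]
    exact this
  have hconc : StrictConcaveOn ℝ (Set.Icc 1 ((m : ℝ) - d)) c := by
    refine ⟨convex_Icc _ _, fun x hx y hy hne a b ha hb hab => ?_⟩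
    have hx1 : (0:ℝ) ≤ x - 1 := by linarith [hx.1]
    have hy1 : (0:ℝ) ≤ y - 1 := by linarith [hy.1]
    have hx2 : (0:ℝ) ≤ (m:ℝ) - x - d := by linarith [hx.2]
    have hy2 : (0:ℝ) ≤ (m:ℝ) - y - d := by linarith [hy.2]
    have hne1 : x - 1 ≠ y - 1 := fun h => hne (by linarith [sub_left_inj.mp h])
    have hne2 : (m:ℝ) - x - d ≠ (m:ℝ) - y - d := fun h => hne (by
      have : x = y := by linarith [sub_left_inj.mp h]
      exact this)
    have i1 := hSA.2 (Set.mem_Ici.2 hx1) (Set.mem_Ici.2 hy1) hne1 ha hb hab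
    have i2 := hSA.2 (Set.mem_Ici.2 hx2) (Set.mem_Ici.2 hy2) hne2 ha hb hab
    have e1 : a • (x - 1) + b • (y - 1) = (a • x + b • y) - 1 := by
      simp only [smul_eq_mul]; linear_combination (-1 : ℝ) * hab
    have e2 : a • ((m:ℝ) - x - d) + b • ((m:ℝ) - y - d)
        = (m:ℝ) - (a • x + b • y) - d := by
      simp only [smul_eq_mul]; linear_combination ((m:ℝ) - d) * hab
    rw [e1] at i1
    rw [e2] at i2
    rw [hc x, hc y, hc (a • x + b • y)]
    simp only [smul_eq_mul] at i1 i2 ⊢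
    have hK : a * K + b * K = K := by linear_combination K * hab
    nlinarith [i1, i2]
  have hsym : ∀ t : ℝ, c t = c ((m : ℝ) - d + 1 - t) := by
    intro t
    rw [hc t, hc ((m : ℝ) - d + 1 - t)]
    have e1 : (m:ℝ) - d + 1 - t - 1 = (m:ℝ) - t - d := by ring
    have e2 : (m:ℝ) - ((m:ℝ) - d + 1 - t) - d = t - 1 := by ring
    rw [e1, e2]
    ring
  refine ⟨hconc, hsym, ?_⟩
  intro t t' ht htt' ht'
  have hmd : (1:ℝ) < (m:ℝ) - d := by
    have : (1:ℝ) < ((m:ℝ) - d + 1) / 2 := lt_of_lt_of_le (lt_of_le_of_lt ht htt') ht'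
    linarith
  set s : ℝ := (m:ℝ) - d + 1 - t with hsdef
  have hts : t' < s := by
    simp only [hsdef]
    linarith
  have htmem : t ∈ Set.Icc (1:ℝ) ((m:ℝ) - d) := ⟨ht, by linarith⟩
  have hsmem : s ∈ Set.Icc (1:ℝ) ((m:ℝ) - d) := ⟨by simp only [hsdef]; linarith,
    by simp only [hsdef]; linarith⟩
  have hst : t < s := lt_trans htt' hts
  have hden : (0:ℝ) < s - t := by linarith
  set a : ℝ := (s - t') / (s - t) with hadef
  set b : ℝ := (t' - t) / (s - t) with hbdef
  have ha : 0 < a := div_pos (by linarith) hden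
  have hb : 0 < b := div_pos (by linarith) hden
  have hab : a + b = 1 := by
    rw [hadef, hbdef, ← add_div, div_eq_one_iff_eq (ne_of_gt hden)]
    ring
  have hcomb : a • t + b • s = t' := by
    simp only [smul_eq_mul, hadef, hbdef]
    field_simp
    ring
  have key := hconc.2 htmem hsmem (ne_of_lt hst) ha hb hab
  rw [hcomb] at key
  have hcs : c s = c t := (hsym t).symm
  simp only [smul_eq_mul] at key
  have hcc : a * c t + b * c s = c t := by
    rw [hcs]; linear_combination (c t) * hab
  linarith [key, hcc]
end

section
/- For any integers n ≥ 1 and a, b, m with 1 ≤ a < b ≤ m, the number of linear extensions of the cluster poset Q_n^{m,a,b} satisfies e(Q_n^{m,a,b})/((m−1)n + m − b + a)! = ∫_{0<x₀<⋯<x_n<1} ∏_{i=0}^n (x_i^{a−1}/(a−1)!)((1−x_i)^{m−b}/(m−b)!) ∏_{i=0}^{n−1} (x_{i+1}−x_i)^{b−a−1}/(b−a−1)! dx. -/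
open MeasureTheory

namespace Cluster

/-- The underlying set of the modified cluster poset `Q_n^{m,a,b}`: spine elements
`X_0 < ⋯ < X_n` (where `X_{i-1} = A_{i,a}` and `X_i = A_{i,b}`), for each `i ∈ [0,n]` a
chain of `a−1` elements below `X_i` and a chain of `m−b` elements above `X_i`, and for each
`i ∈ [0,n−1]` a chain of `b−a−1` elements between `X_i` and `X_{i+1}`.  It has cardinality
`(m−1)n + m − b + a`. -/
def Elt (n m a b : ℕ) : Type :=
  Fin (n+1) ⊕ (Fin (n+1) × Fin (a-1)) ⊕ (Fin (n+1) × Fin (m-b)) ⊕ (Fin n × Fin (b-a-1))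

instance (n m a b : ℕ) : Fintype (Elt n m a b) := by
  unfold Elt; infer_instance

/-- The spine element `X_i`. -/
def spine {n m a b : ℕ} (i : Fin (n+1)) : Elt n m a b := Sum.inl i

/-- The `k`-th element of the chain of `a−1` elements below `X_i`. -/
def down {n m a b : ℕ} (i : Fin (n+1)) (k : Fin (a-1)) : Elt n m a b :=
  Sum.inr (Sum.inl (i, k))

/-- The `k`-th element of the chain of `m−b` elements above `X_i`. -/
def up {n m a b : ℕ} (i : Fin (n+1)) (k : Fin (m-b)) : Elt n m a b :=
  Sum.inr (Sum.inr (Sum.inl (i, k)))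

/-- The `k`-th element of the chain of `b−a−1` elements between `X_i` and `X_{i+1}`. -/
def mid {n m a b : ℕ} (i : Fin n) (k : Fin (b-a-1)) : Elt n m a b :=
  Sum.inr (Sum.inr (Sum.inr (i, k)))


open Set
open scoped ENNReal

section Chamber


variable {ι : Type*} [Fintype ι]

/-- The set of configurations in the cube `(u,v)^ι` satisfying the strict constraints `R`. -/
def chamberSet (R : ι → ι → Prop) (u v : ℝ) : Set (ι → ℝ) :=
  {y | (∀ i, y i ∈ Set.Ioo u v) ∧ ∀ p q, R p q → y p < y q}

lemma measurableSet_chamberSet (R : ι → ι → Prop) (u v : ℝ) :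
    MeasurableSet (chamberSet R u v) := by
  classical
  unfold chamberSet
  rw [Set.setOf_and]
  apply MeasurableSet.inter
  · rw [show {y : ι → ℝ | ∀ i, y i ∈ Set.Ioo u v} = Set.pi Set.univ (fun _ => Set.Ioo u v) by
      ext; simp [Set.mem_pi]]
    exact MeasurableSet.univ_pi fun _ => measurableSet_Ioo
  · have : {y : ι → ℝ | ∀ p q, R p q → y p < y q} =
        ⋂ p, ⋂ q, {y : ι → ℝ | R p q → y p < y q} := by
      ext; simp [Set.mem_iInter]
    rw [this]
    refine MeasurableSet.iInter fun p => MeasurableSet.iInter fun q => ?_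
    by_cases h : R p q
    · simp only [h, forall_true_left]
      exact measurableSet_lt (measurable_pi_apply p) (measurable_pi_apply q)
    · simp only [h]
      simp
  
lemma pair_null (p q : ι) (hpq : p ≠ q) : volume {y : ι → ℝ | y p = y q} = 0 := by
  classical
  have h : {y : ι → ℝ | y p = y q} =
      (LinearMap.ker ((LinearMap.proj p : (ι → ℝ) →ₗ[ℝ] ℝ) - LinearMap.proj q) : Set (ι → ℝ)) := by
    ext y
    simp [LinearMap.mem_ker, sub_eq_zero]
  classical
  rw [h]
  apply Measure.addHaar_submodule
  intro htop
  have hmem : (Pi.single p 1 : ι → ℝ) ∈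
      LinearMap.ker ((LinearMap.proj p : (ι → ℝ) →ₗ[ℝ] ℝ) - LinearMap.proj q) := by
    rw [htop]; trivial
  rw [LinearMap.mem_ker] at hmem
  simp only [LinearMap.sub_apply, LinearMap.proj_apply] at hmem
  rw [Pi.single_eq_same, Pi.single_eq_of_ne (Ne.symm hpq)] at hmem
  norm_num at hmem

lemma measurableSet_ties : MeasurableSet {y : ι → ℝ | ∃ p q, p ≠ q ∧ y p = y q} := by
  have : {y : ι → ℝ | ∃ p q, p ≠ q ∧ y p = y q} =
      ⋃ p, ⋃ q, {y : ι → ℝ | p ≠ q ∧ y p = y q} := by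
    ext; simp
  rw [this]
  refine MeasurableSet.iUnion fun p => MeasurableSet.iUnion fun q => ?_
  rw [Set.setOf_and]
  exact MeasurableSet.inter (by by_cases h : p = q <;> simp [h]) 
    (measurableSet_eq_fun (measurable_pi_apply p) (measurable_pi_apply q))

lemma ties_null : volume {y : ι → ℝ | ∃ p q, p ≠ q ∧ y p = y q} = 0 := by
  have hsub : {y : ι → ℝ | ∃ p q, p ≠ q ∧ y p = y q} ⊆
      ⋃ p, ⋃ q, {y : ι → ℝ | p ≠ q ∧ y p = y q} := by
    intro y hy; simpa using hy
  refine measure_mono_null hsub (measure_iUnion_null fun p => measure_iUnion_null fun q => ?_)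
  by_cases h : p = q
  · simp [h]
  · refine measure_mono_null (fun y hy => hy.2) (pair_null p q h)

lemma strictMono_equiv_apply {N : ℕ} (σ : Fin N ≃ Fin N) (h : StrictMono ⇑σ) :
    ∀ j, σ j = j := by
  intro j
  let o : Fin N ≃o Fin N := { toEquiv := σ, map_rel_iff' := @fun x y => h.le_iff_le }
  exact Fin.ext (Fin.coe_orderIso_apply o j)

lemma exists_sorting {N : ℕ} (hN : Fintype.card ι = N) (y : ι → ℝ)
    (hy : Function.Injective y) :
    ∃ σ : ι ≃ Fin N, ∀ p q, y p < y q ↔ σ p < σ q := by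
  letI lo : LinearOrder ι := LinearOrder.lift' y hy
  let e := monoEquivOfFin ι hN
  refine ⟨e.symm.toEquiv, fun p q => ?_⟩
  have h2 : e.symm p < e.symm q ↔ p < q := OrderIso.lt_iff_lt e.symm
  exact Iff.trans (Iff.rfl) h2.symm

lemma chamber_perm {N : ℕ} (σ : ι ≃ Fin N) (u v : ℝ) :
    volume (chamberSet (fun p q => σ p < σ q) u v) =
      volume (chamberSet (fun j k : Fin N => j < k) u v) := by
  have mp := volume_measurePreserving_piCongrLeft (fun _ : ι => ℝ) σ.symm
  rw [← mp.measure_preimage (measurableSet_chamberSet _ u v).nullMeasurableSet]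
  congr 1
  ext z
  have hz : ∀ i, (MeasurableEquiv.piCongrLeft (fun _ : ι => ℝ) σ.symm) z i = z (σ i) := by
    intro i
    conv_lhs => rw [← σ.symm_apply_apply i]
    rw [MeasurableEquiv.coe_piCongrLeft]
    exact Equiv.piCongrLeft_apply_apply (fun _ : ι => ℝ) σ.symm z (σ i)
  simp only [Set.mem_preimage, chamberSet, Set.mem_setOf_eq, hz]
  constructor
  · rintro ⟨hcube, hord⟩
    refine ⟨fun j => by simpa using hcube (σ.symm j), fun j k hjk => ?_⟩
    have := hord (σ.symm j) (σ.symm k) (by simpa using hjk)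
    simpa using this
  · rintro ⟨hcube, hord⟩
    exact ⟨fun i => hcube (σ i), fun p q h => hord (σ p) (σ q) h⟩

lemma chamber_eq_card_mul (R : ι → ι → Prop) {N : ℕ} (hN : Fintype.card ι = N) (u v : ℝ) :
    volume (chamberSet R u v) =
      (Nat.card {σ : ι ≃ Fin N // ∀ p q, R p q → σ p < σ q} : ℕ) *
        volume (chamberSet (fun j k : Fin N => j < k) u v) := by
  classical
  set A := {y : ι → ℝ | ∃ p q, p ≠ q ∧ y p = y q} with hA
  have hAnull : volume A = 0 := ties_null
  have hdecomp : chamberSet R u v \ A =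
      ⋃ σ : {σ : ι ≃ Fin N // ∀ p q, R p q → σ p < σ q},
        (chamberSet (fun p q => σ.1 p < σ.1 q) u v \ A) := by
    ext y
    simp only [Set.mem_diff, Set.mem_iUnion]
    constructor
    · rintro ⟨⟨hcube, hrel⟩, hyA⟩
      have hinj : Function.Injective y := by
        intro p q hpq
        by_contra hne
        exact hyA ⟨p, q, hne, hpq⟩
      obtain ⟨σ, hσ⟩ := exists_sorting hN y hinj
      exact ⟨⟨σ, fun p q hr => (hσ p q).1 (hrel p q hr)⟩,
        ⟨⟨hcube, fun p q h => (hσ p q).2 h⟩, hyA⟩⟩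
    · rintro ⟨σ, ⟨⟨hcube, hord⟩, hyA⟩⟩
      exact ⟨⟨hcube, fun p q hr => hord p q (σ.2 p q hr)⟩, hyA⟩
  have hdisj : Pairwise (Function.onFun Disjoint
      fun σ : {σ : ι ≃ Fin N // ∀ p q, R p q → σ p < σ q} =>
        chamberSet (fun p q => σ.1 p < σ.1 q) u v \ A) := by
    intro σ τ hne
    rw [Function.onFun, Set.disjoint_left]
    rintro y ⟨⟨_, hσy⟩, hyA⟩ ⟨⟨_, hτy⟩, _⟩
    apply hne
    have hyinj : ∀ p q : ι, p ≠ q → y p ≠ y q := by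
      intro p q h1 h2
      exact hyA ⟨p, q, h1, h2⟩
    have hiff : ∀ (ρ : ι ≃ Fin N), (∀ p q, ρ p < ρ q → y p < y q) →
        ∀ p q, ρ p < ρ q ↔ y p < y q := by
      intro ρ hρ p q
      refine ⟨hρ p q, fun hy => ?_⟩
      rcases lt_trichotomy (ρ p) (ρ q) with h | h | h
      · exact h
      · exact absurd (congrArg y (ρ.injective h)) (hyinj p q (fun he => absurd (congrArg y he) (ne_of_lt hy)) )
      · exact absurd (hρ q p h) (lt_asymm hy)
    have h1 := hiff σ.1 hσy
    have h2 := hiff τ.1 hτy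
    have key := strictMono_equiv_apply (τ.1.symm.trans σ.1) (fun j k hjk => by
      have hy : y (τ.1.symm j) < y (τ.1.symm k) := by
        refine (h2 _ _).1 ?_
        simpa using hjk
      exact (h1 _ _).2 hy)
    apply Subtype.ext
    apply Equiv.ext
    intro p
    have := key (τ.1 p)
    simpa using this
  haveI : Fintype {σ : ι ≃ Fin N // ∀ p q, R p q → σ p < σ q} := Fintype.ofFinite _
  calc volume (chamberSet R u v) = volume (chamberSet R u v \ A) :=
        (measure_diff_null hAnull).symm
    _ = volume (⋃ σ : {σ : ι ≃ Fin N // ∀ p q, R p q → σ p < σ q},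
        (chamberSet (fun p q => σ.1 p < σ.1 q) u v \ A)) := by rw [hdecomp]
    _ = ∑' σ : {σ : ι ≃ Fin N // ∀ p q, R p q → σ p < σ q},
        volume (chamberSet (fun p q => σ.1 p < σ.1 q) u v \ A) :=
        measure_iUnion hdisj fun σ => ((measurableSet_chamberSet _ u v).diff measurableSet_ties)
    _ = ∑' σ : {σ : ι ≃ Fin N // ∀ p q, R p q → σ p < σ q},
        volume (chamberSet (fun j k : Fin N => j < k) u v) := by
        refine tsum_congr fun σ => ?_
        rw [measure_diff_null hAnull, chamber_perm σ.1 u v]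
    _ = _ := by
        rw [tsum_fintype, Finset.sum_const, nsmul_eq_mul, Nat.card_eq_fintype_card]
        simp

lemma card_chain (ℓ : ℕ) :
    Nat.card {σ : Fin ℓ ≃ Fin ℓ // ∀ p q : Fin ℓ, p < q → σ p < σ q} = 1 := by
  rw [Nat.card_eq_one_iff_unique]
  constructor
  · constructor
    intro σ τ
    apply Subtype.ext
    apply Equiv.ext
    intro j
    rw [strictMono_equiv_apply σ.1 (fun p q h => σ.2 p q h) j,
      strictMono_equiv_apply τ.1 (fun p q h => τ.2 p q h) j]
  · exact ⟨⟨Equiv.refl _, fun p q h => h⟩⟩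

lemma chain_volume (ℓ : ℕ) {u v : ℝ} (huv : u ≤ v) :
    volume (chamberSet (fun j k : Fin ℓ => j < k) u v) =
      ENNReal.ofReal ((v - u) ^ ℓ / (Nat.factorial ℓ : ℝ)) := by
  have hbot := chamber_eq_card_mul (ι := Fin ℓ) (fun _ _ => False) (Fintype.card_fin ℓ) u v
  have hcube : chamberSet (ι := Fin ℓ) (fun _ _ => False) u v =
      Set.pi Set.univ (fun _ : Fin ℓ => Set.Ioo u v) := by
    ext y; simp [chamberSet, Set.mem_pi]
  have hvol : volume (chamberSet (ι := Fin ℓ) (fun _ _ => False) u v) =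
      ENNReal.ofReal (v - u) ^ ℓ := by
    rw [hcube, volume_pi_pi]
    simp [Real.volume_Ioo]
  have hcard : Nat.card {σ : Fin ℓ ≃ Fin ℓ // ∀ p q : Fin ℓ, False → σ p < σ q} =
      Nat.factorial ℓ := by
    rw [Nat.card_congr (Equiv.subtypeUnivEquiv (fun σ => fun p q h => h.elim)),
      Nat.card_eq_fintype_card, Fintype.card_equiv (Equiv.refl _), Fintype.card_fin]
  rw [hvol, hcard] at hbot
  have hfac0 : (Nat.factorial ℓ : ℝ≥0∞) ≠ 0 := by
    exact_mod_cast Nat.cast_ne_zero.2 (Nat.factorial_pos ℓ).ne'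
  have hfact : (Nat.factorial ℓ : ℝ≥0∞) ≠ ⊤ := ENNReal.natCast_ne_top _
  have hD : volume (chamberSet (fun j k : Fin ℓ => j < k) u v) =
      ENNReal.ofReal (v - u) ^ ℓ / (Nat.factorial ℓ : ℝ≥0∞) :=
    (ENNReal.eq_div_iff hfac0 hfact).2 hbot.symm
  rw [hD, ENNReal.ofReal_div_of_pos (by exact_mod_cast Nat.factorial_pos ℓ),
    ENNReal.ofReal_pow (sub_nonneg.2 huv), ENNReal.ofReal_natCast]


lemma chamber_volume (R : ι → ι → Prop) {N : ℕ} (hN : Fintype.card ι = N) {u v : ℝ}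
    (huv : u ≤ v) :
    volume (chamberSet R u v) =
      (Nat.card {σ : ι ≃ Fin N // ∀ p q, R p q → σ p < σ q} : ℕ) *
        ENNReal.ofReal ((v - u) ^ N / (Nat.factorial N : ℝ)) := by
  rw [chamber_eq_card_mul R hN u v, chain_volume N huv]

end Chamber


/-- Splitting off the first row of a `Fin (k+1) × Fin ℓ` grid. -/
def finSuccProdEquiv (k ℓ : ℕ) : (Fin ℓ ⊕ (Fin k × Fin ℓ)) ≃ (Fin (k+1) × Fin ℓ) where
  toFun := Sum.elim (fun j => (0, j)) (fun p => (p.1.succ, p.2))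
  invFun := fun p => Fin.cases (Sum.inl p.2) (fun i => Sum.inr (i, p.2)) p.1
  left_inv := by rintro (j | ⟨i, j⟩) <;> simp
  right_inv := by
    rintro ⟨i, j⟩
    refine Fin.cases ?_ ?_ i <;> simp

/-- A product of per-row constraints on a grid of variables. -/
def blockSet {k ℓ : ℕ} (B : Fin k → Set (Fin ℓ → ℝ)) : Set (Fin k × Fin ℓ → ℝ) :=
  {w | ∀ i, (fun j => w (i, j)) ∈ B i}

lemma measurableSet_block {k ℓ : ℕ} (B : Fin k → Set (Fin ℓ → ℝ))
    (hB : ∀ i, MeasurableSet (B i)) :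
    MeasurableSet (blockSet B) := by
  have : blockSet B =
      ⋂ i, (fun (w : Fin k × Fin ℓ → ℝ) (j : Fin ℓ) => w (i, j)) ⁻¹' B i := by
    ext w; simp [blockSet, Set.mem_iInter]
  rw [this]
  exact MeasurableSet.iInter fun i =>
    (measurable_pi_lambda _ fun j => measurable_pi_apply (i, j)) (hB i)

lemma block_volume : ∀ (k : ℕ) {ℓ : ℕ} (B : Fin k → Set (Fin ℓ → ℝ)),
    (∀ i, MeasurableSet (B i)) →
    volume (blockSet B) = ∏ i, volume (B i) := by
  intro k
  induction k with
  | zero =>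
    intro ℓ B hB
    have : blockSet B = Set.univ :=
      Set.eq_univ_iff_forall.2 fun w i => i.elim0
    rw [this, volume_pi, Measure.pi_univ]
    simp
  | succ k ih =>
    intro ℓ B hB
    set e := finSuccProdEquiv k ℓ
    set E := MeasurableEquiv.piCongrLeft (fun _ : Fin (k+1) × Fin ℓ => ℝ) e with hE
    have mpE := volume_measurePreserving_piCongrLeft (fun _ : Fin (k+1) × Fin ℓ => ℝ) e
    set S := blockSet B with hS
    have hSmeas : MeasurableSet S := measurableSet_block B hB
    set T := blockSet (fun i => B i.succ) with hT
    have hTmeas : MeasurableSet T := measurableSet_block _ fun i => hB i.succ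
    set G := MeasurableEquiv.sumPiEquivProdPi (fun _ : Fin ℓ ⊕ (Fin k × Fin ℓ) => ℝ) with hG
    have mpG := volume_measurePreserving_sumPiEquivProdPi (fun _ : Fin ℓ ⊕ (Fin k × Fin ℓ) => ℝ)
    have happ : ∀ (g : (Fin ℓ ⊕ (Fin k × Fin ℓ)) → ℝ) (s : Fin ℓ ⊕ (Fin k × Fin ℓ)),
        E g (e s) = g s := by
      intro g s
      rw [hE, MeasurableEquiv.coe_piCongrLeft]
      exact Equiv.piCongrLeft_apply_apply (fun _ => ℝ) e g s
    have hGfst : ∀ g : (Fin ℓ ⊕ (Fin k × Fin ℓ)) → ℝ, (G g).1 = fun j => g (Sum.inl j) := fun g => rfl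
    have hGsnd : ∀ g : (Fin ℓ ⊕ (Fin k × Fin ℓ)) → ℝ, (G g).2 = fun p => g (Sum.inr p) := fun g => rfl
    have hpre : E ⁻¹' S = G ⁻¹' ((B 0) ×ˢ T) := by
      ext g
      simp only [Set.mem_preimage, hS, hT, blockSet, Set.mem_setOf_eq, Set.mem_prod, hGfst, hGsnd]
      rw [Fin.forall_fin_succ]
      have h0 : (fun j => E g (0, j)) = fun j => g (Sum.inl j) :=
        funext fun j => happ g (Sum.inl j)
      have hs : ∀ i : Fin k, (fun j => E g (i.succ, j)) = fun j => g (Sum.inr (i, j)) :=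
        fun i => funext fun j => happ g (Sum.inr (i, j))
      constructor
      · rintro ⟨ha, hb⟩
        refine ⟨h0 ▸ ha, fun i => (hs i) ▸ hb i⟩
      · rintro ⟨ha, hb⟩
        refine ⟨h0 ▸ ha, fun i => (hs i) ▸ hb i⟩
    calc volume S = volume (E ⁻¹' S) := (mpE.measure_preimage hSmeas.nullMeasurableSet).symm
      _ = volume (G ⁻¹' ((B 0) ×ˢ T)) := by rw [hpre]
      _ = volume ((B 0) ×ˢ T) :=
          mpG.measure_preimage (((hB 0).prod hTmeas).nullMeasurableSet)
      _ = volume (B 0) * volume T := by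
          rw [Measure.volume_eq_prod, Measure.prod_prod]
      _ = volume (B 0) * ∏ i : Fin k, volume (B i.succ) := by rw [ih _ fun i => hB i.succ]
      _ = ∏ i, volume (B i) := (Fin.prod_univ_succ fun i => volume (B i)).symm


section Main

/-- The non-spine index set. -/
abbrev RestT (n m a b : ℕ) : Type :=
  (Fin (n+1) × Fin (a-1)) ⊕ ((Fin (n+1) × Fin (m-b)) ⊕ (Fin n × Fin (b-a-1)))

/-- The index set of `Q_n^{m,a,b}` as an explicit sum type (definitionally `Elt n m a b`). -/
abbrev I0 (n m a b : ℕ) : Type := Fin (n+1) ⊕ RestT n m a b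

/-- The generating relations of the poset `Q_n^{m,a,b}`. -/
def Rel (n m a b : ℕ) : I0 n m a b → I0 n m a b → Prop := fun p q =>
  match p, q with
  | .inl i, .inl j => i < j
  | .inr (.inl (i,k)), .inr (.inl (j,l)) => i = j ∧ k < l
  | .inr (.inl (i,_)), .inl j => i = j
  | .inl i, .inr (.inr (.inl (j,_))) => i = j
  | .inr (.inr (.inl (i,k))), .inr (.inr (.inl (j,l))) => i = j ∧ k < l
  | .inr (.inr (.inr (i,k))), .inr (.inr (.inr (j,l))) => i = j ∧ k < l
  | .inl i, .inr (.inr (.inr (j,_))) => i = j.castSucc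
  | .inr (.inr (.inr (j,_))), .inl i => i = j.succ
  | _, _ => False

/-- The region of increasing spines in `(0,1)`. -/
def regionA (n : ℕ) : Set (Fin (n+1) → ℝ) :=
  {z : Fin (n+1) → ℝ | 0 < z 0 ∧ (∀ i : Fin n, z i.castSucc < z i.succ) ∧ z (Fin.last n) < 1}

lemma measurableSet_regionA (n : ℕ) : MeasurableSet (regionA n) := by
  unfold regionA
  rw [Set.setOf_and, Set.setOf_and]
  refine MeasurableSet.inter (measurableSet_lt measurable_const (measurable_pi_apply 0))
    (MeasurableSet.inter ?_ (measurableSet_lt (measurable_pi_apply _) measurable_const))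
  have : {z : Fin (n+1) → ℝ | ∀ i : Fin n, z i.castSucc < z i.succ} =
      ⋂ i : Fin n, {z : Fin (n+1) → ℝ | z i.castSucc < z i.succ} := by
    ext z; simp
  rw [this]
  exact MeasurableSet.iInter fun i =>
    measurableSet_lt (measurable_pi_apply _) (measurable_pi_apply _)

lemma regionA_strictMono {n : ℕ} {z : Fin (n+1) → ℝ} (hz : z ∈ regionA n) : StrictMono z :=
  Fin.strictMono_iff_lt_succ.2 hz.2.1

lemma regionA_bounds {n : ℕ} {z : Fin (n+1) → ℝ} (hz : z ∈ regionA n) (i : Fin (n+1)) :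
    0 < z i ∧ z i < 1 :=
  ⟨lt_of_lt_of_le hz.1 ((regionA_strictMono hz).monotone (Fin.zero_le i)),
   lt_of_le_of_lt ((regionA_strictMono hz).monotone (Fin.le_last i)) hz.2.2⟩

/-- The set of admissible non-spine configurations, given a spine `x`. -/
def Wfull (n m a b : ℕ) (x : Fin (n+1) → ℝ) : Set (RestT n m a b → ℝ) :=
  (MeasurableEquiv.sumPiEquivProdPi (fun _ : RestT n m a b => ℝ)) ⁻¹'
    ((blockSet fun i : Fin (n+1) => chamberSet (fun k l : Fin (a-1) => k < l) 0 (x i)) ×ˢ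
      ((MeasurableEquiv.sumPiEquivProdPi
          (fun _ : (Fin (n+1) × Fin (m-b)) ⊕ (Fin n × Fin (b-a-1)) => ℝ)) ⁻¹'
        ((blockSet fun i : Fin (n+1) => chamberSet (fun k l : Fin (m-b) => k < l) (x i) 1) ×ˢ
          (blockSet fun i : Fin n =>
            chamberSet (fun k l : Fin (b-a-1) => k < l) (x i.castSucc) (x i.succ)))))

lemma mem_Wfull {n m a b : ℕ} {x : Fin (n+1) → ℝ} {r : RestT n m a b → ℝ} :
    r ∈ Wfull n m a b x ↔
      (∀ i : Fin (n+1), (∀ k, r (.inl (i,k)) ∈ Set.Ioo 0 (x i)) ∧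
        ∀ k l, k < l → r (.inl (i,k)) < r (.inl (i,l))) ∧
      ((∀ i : Fin (n+1), (∀ k, r (.inr (.inl (i,k))) ∈ Set.Ioo (x i) 1) ∧
        ∀ k l, k < l → r (.inr (.inl (i,k))) < r (.inr (.inl (i,l)))) ∧
      (∀ i : Fin n, (∀ k, r (.inr (.inr (i,k))) ∈ Set.Ioo (x i.castSucc) (x i.succ)) ∧
        ∀ k l, k < l → r (.inr (.inr (i,k))) < r (.inr (.inr (i,l))))) :=
  Iff.rfl

/-- The corresponding product-space set. -/
def T1 (n m a b : ℕ) : Set ((Fin (n+1) → ℝ) × (RestT n m a b → ℝ)) :=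
  {p | p.1 ∈ regionA n ∧ p.2 ∈ Wfull n m a b p.1}

lemma measurableSet_T1 (n m a b : ℕ) : MeasurableSet (T1 n m a b) := by
  classical
  have md : ∀ (c : RestT n m a b),
      Measurable fun p : (Fin (n+1) → ℝ) × (RestT n m a b → ℝ) => p.2 c :=
    fun c => (measurable_pi_apply c).comp measurable_snd
  have mx : ∀ i : Fin (n+1),
      Measurable fun p : (Fin (n+1) → ℝ) × (RestT n m a b → ℝ) => p.1 i :=
    fun i => (measurable_pi_apply i).comp measurable_fst
  have hIoo : ∀ {f g h : ((Fin (n+1) → ℝ) × (RestT n m a b → ℝ)) → ℝ},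
      Measurable f → Measurable g → Measurable h →
      MeasurableSet {p : (Fin (n+1) → ℝ) × (RestT n m a b → ℝ) | f p ∈ Set.Ioo (g p) (h p)} := by
    intro f g h hf hg hh
    have : {p : (Fin (n+1) → ℝ) × (RestT n m a b → ℝ) | f p ∈ Set.Ioo (g p) (h p)} =
        {p | g p < f p} ∩ {p | f p < h p} := by
      ext p; simp [Set.mem_Ioo]
    rw [this]
    exact (measurableSet_lt hg hf).inter (measurableSet_lt hf hh)
  have hGuard : ∀ {c c' : RestT n m a b} {P : Prop},
      MeasurableSet {p : (Fin (n+1) → ℝ) × (RestT n m a b → ℝ) | P → p.2 c < p.2 c'} := by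
    intro c c' P
    by_cases hP : P
    · simp only [hP, forall_true_left]
      exact measurableSet_lt (md c) (md c')
    · have : {p : (Fin (n+1) → ℝ) × (RestT n m a b → ℝ) | P → p.2 c < p.2 c'} = Set.univ := by
        ext p; simp [hP]
      rw [this]; exact MeasurableSet.univ
  have hsplit : T1 n m a b = {p : (Fin (n+1) → ℝ) × (RestT n m a b → ℝ) | p.1 ∈ regionA n} ∩
      ((⋂ (i : Fin (n+1)) (k : Fin (a-1)),
        {p : (Fin (n+1) → ℝ) × (RestT n m a b → ℝ) | p.2 (.inl (i,k)) ∈ Set.Ioo 0 (p.1 i)}) ∩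
      ((⋂ (i : Fin (n+1)) (k : Fin (a-1)) (l : Fin (a-1)),
        {p : (Fin (n+1) → ℝ) × (RestT n m a b → ℝ) | k < l → p.2 (.inl (i,k)) < p.2 (.inl (i,l))}) ∩
      ((⋂ (i : Fin (n+1)) (k : Fin (m-b)),
        {p : (Fin (n+1) → ℝ) × (RestT n m a b → ℝ) | p.2 (.inr (.inl (i,k))) ∈ Set.Ioo (p.1 i) 1}) ∩
      ((⋂ (i : Fin (n+1)) (k : Fin (m-b)) (l : Fin (m-b)),
        {p : (Fin (n+1) → ℝ) × (RestT n m a b → ℝ) | k < l → p.2 (.inr (.inl (i,k))) < p.2 (.inr (.inl (i,l)))}) ∩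
      ((⋂ (i : Fin n) (k : Fin (b-a-1)),
        {p : (Fin (n+1) → ℝ) × (RestT n m a b → ℝ) | p.2 (.inr (.inr (i,k))) ∈ Set.Ioo (p.1 i.castSucc) (p.1 i.succ)}) ∩
      (⋂ (i : Fin n) (k : Fin (b-a-1)) (l : Fin (b-a-1)),
        {p : (Fin (n+1) → ℝ) × (RestT n m a b → ℝ) | k < l → p.2 (.inr (.inr (i,k))) < p.2 (.inr (.inr (i,l)))})))))) := by
    ext p
    simp only [T1, Set.mem_setOf_eq, mem_Wfull, Set.mem_inter_iff, Set.mem_iInter]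
    constructor
    · rintro ⟨hA, h1, h2, h3⟩
      exact ⟨hA, fun i k => (h1 i).1 k, fun i k l hkl => (h1 i).2 k l hkl,
        fun i k => (h2 i).1 k, fun i k l hkl => (h2 i).2 k l hkl,
        fun i k => (h3 i).1 k, fun i k l hkl => (h3 i).2 k l hkl⟩
    · rintro ⟨hA, g1, g2, g3, g4, g5, g6⟩
      exact ⟨hA, fun i => ⟨fun k => g1 i k, fun k l hkl => g2 i k l hkl⟩,
        fun i => ⟨fun k => g3 i k, fun k l hkl => g4 i k l hkl⟩,
        fun i => ⟨fun k => g5 i k, fun k l hkl => g6 i k l hkl⟩⟩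
  rw [hsplit]
  refine ((measurableSet_regionA n).preimage measurable_fst).inter
    (MeasurableSet.inter ?_ (MeasurableSet.inter ?_ (MeasurableSet.inter ?_
      (MeasurableSet.inter ?_ (MeasurableSet.inter ?_ ?_)))))
  · exact MeasurableSet.iInter fun i => MeasurableSet.iInter fun k =>
      hIoo (md _) measurable_const (mx i)
  · exact MeasurableSet.iInter fun i => MeasurableSet.iInter fun k =>
      MeasurableSet.iInter fun l => hGuard
  · exact MeasurableSet.iInter fun i => MeasurableSet.iInter fun k =>
      hIoo (md _) (mx i) measurable_const
  · exact MeasurableSet.iInter fun i => MeasurableSet.iInter fun k =>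
      MeasurableSet.iInter fun l => hGuard
  · exact MeasurableSet.iInter fun i => MeasurableSet.iInter fun k =>
      hIoo (md _) (mx i.castSucc) (mx i.succ)
  · exact MeasurableSet.iInter fun i => MeasurableSet.iInter fun k =>
      MeasurableSet.iInter fun l => hGuard

lemma S_eq_preimage (n m a b : ℕ) :
    chamberSet (Rel n m a b) 0 1 =
      (MeasurableEquiv.sumPiEquivProdPi (fun _ : I0 n m a b => ℝ)) ⁻¹' T1 n m a b := by
  ext y
  constructor
  · rintro ⟨hcube, hrel⟩
    have hxA : (fun i : Fin (n+1) => y (Sum.inl i)) ∈ regionA n :=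
      ⟨(hcube (Sum.inl 0)).1,
        fun i => hrel (Sum.inl i.castSucc) (Sum.inl i.succ) (Fin.castSucc_lt_succ : i.castSucc < i.succ),
        (hcube (Sum.inl (Fin.last n))).2⟩
    refine ⟨hxA, ?_⟩
    refine ⟨fun i => ⟨fun k => ⟨(hcube _).1, hrel (Sum.inr (Sum.inl (i,k))) (Sum.inl i) rfl⟩,
        fun k l hkl => hrel (Sum.inr (Sum.inl (i,k))) (Sum.inr (Sum.inl (i,l))) ⟨rfl, hkl⟩⟩,
      fun i => ⟨fun k => ⟨hrel (Sum.inl i) (Sum.inr (Sum.inr (Sum.inl (i,k)))) rfl, (hcube _).2⟩,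
        fun k l hkl => hrel (Sum.inr (Sum.inr (Sum.inl (i,k)))) (Sum.inr (Sum.inr (Sum.inl (i,l)))) ⟨rfl, hkl⟩⟩,
      fun i => ⟨fun k => ⟨hrel (Sum.inl i.castSucc) (Sum.inr (Sum.inr (Sum.inr (i,k)))) rfl,
          hrel (Sum.inr (Sum.inr (Sum.inr (i,k)))) (Sum.inl i.succ) rfl⟩,
        fun k l hkl => hrel (Sum.inr (Sum.inr (Sum.inr (i,k)))) (Sum.inr (Sum.inr (Sum.inr (i,l)))) ⟨rfl, hkl⟩⟩⟩
  · rintro ⟨hxA, hW⟩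
    obtain ⟨hd, hu, hm'⟩ := (mem_Wfull).1 hW
    have hb := fun i => regionA_bounds hxA i
    have hsm := regionA_strictMono hxA
    constructor
    · rintro (i | (⟨i,k⟩ | (⟨i,k⟩ | ⟨i,k⟩)))
      · exact hb i
      · exact ⟨((hd i).1 k).1, lt_trans ((hd i).1 k).2 (hb i).2⟩
      · exact ⟨lt_trans (hb i).1 ((hu i).1 k).1, ((hu i).1 k).2⟩
      · exact ⟨lt_trans (hb i.castSucc).1 ((hm' i).1 k).1,
          lt_trans ((hm' i).1 k).2 (hb i.succ).2⟩
    · intro p q hpq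
      rcases p with i | (⟨i,k⟩ | (⟨i,k⟩ | ⟨i,k⟩)) <;>
        rcases q with j | (⟨j,l⟩ | (⟨j,l⟩ | ⟨j,l⟩)) <;>
        simp only [Rel] at hpq
      · exact hsm hpq
      · obtain rfl := hpq; exact ((hu _).1 _).1
      · obtain rfl := hpq; exact ((hm' _).1 _).1
      · obtain rfl := hpq; exact ((hd _).1 _).2
      · obtain ⟨rfl, hkl⟩ := hpq; exact (hd _).2 _ _ hkl
      · obtain ⟨rfl, hkl⟩ := hpq; exact (hu _).2 _ _ hkl
      · obtain rfl := hpq; exact ((hm' _).1 _).2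
      · obtain ⟨rfl, hkl⟩ := hpq; exact (hm' _).2 _ _ hkl

lemma Wfull_volume (n m a b : ℕ) {x : Fin (n+1) → ℝ} (hx : x ∈ regionA n) :
    volume (Wfull n m a b x) = ENNReal.ofReal
      ((∏ i, x i ^ (a-1) / (Nat.factorial (a-1) : ℝ) *
          ((1 - x i) ^ (m-b) / (Nat.factorial (m-b) : ℝ))) *
        ∏ i : Fin n, (x i.succ - x i.castSucc) ^ (b-a-1) / (Nat.factorial (b-a-1) : ℝ)) := by
  have hb := fun i => regionA_bounds hx i
  have hsm := regionA_strictMono hx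
  have h0 : ∀ i : Fin (n+1), (0:ℝ) ≤ x i := fun i => (hb i).1.le
  have h1' : ∀ i : Fin (n+1), x i ≤ 1 := fun i => (hb i).2.le
  have hmid : ∀ i : Fin n, x i.castSucc ≤ x i.succ := fun i => (hsm (Fin.castSucc_lt_succ : i.castSucc < i.succ)).le
  have mp2 := volume_measurePreserving_sumPiEquivProdPi (fun _ : RestT n m a b => ℝ)
  have mp3 := volume_measurePreserving_sumPiEquivProdPi
    (fun _ : (Fin (n+1) × Fin (m-b)) ⊕ (Fin n × Fin (b-a-1)) => ℝ)
  unfold Wfull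
  rw [mp2.measure_preimage_equiv, Measure.volume_eq_prod, Measure.prod_prod,
    mp3.measure_preimage_equiv, Measure.volume_eq_prod, Measure.prod_prod,
    block_volume _ _ (fun i => measurableSet_chamberSet _ _ _),
    block_volume _ _ (fun i => measurableSet_chamberSet _ _ _),
    block_volume _ _ (fun i => measurableSet_chamberSet _ _ _)]
  have hd : ∀ i : Fin (n+1), volume (chamberSet (fun k l : Fin (a-1) => k < l) 0 (x i)) =
      ENNReal.ofReal (x i ^ (a-1) / (Nat.factorial (a-1) : ℝ)) := fun i => by
    rw [chain_volume _ (h0 i), sub_zero]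
  have hu : ∀ i : Fin (n+1), volume (chamberSet (fun k l : Fin (m-b) => k < l) (x i) 1) =
      ENNReal.ofReal ((1 - x i) ^ (m-b) / (Nat.factorial (m-b) : ℝ)) := fun i => by
    rw [chain_volume _ (h1' i)]
  have hm : ∀ i : Fin n,
      volume (chamberSet (fun k l : Fin (b-a-1) => k < l) (x i.castSucc) (x i.succ)) =
      ENNReal.ofReal ((x i.succ - x i.castSucc) ^ (b-a-1) / (Nat.factorial (b-a-1) : ℝ)) :=
    fun i => by rw [chain_volume _ (hmid i)]
  rw [Finset.prod_congr rfl fun i _ => hd i, Finset.prod_congr rfl fun i _ => hu i,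
    Finset.prod_congr rfl fun i _ => hm i]
  have nn1 : ∀ i : Fin (n+1), (0:ℝ) ≤ x i ^ (a-1) / (Nat.factorial (a-1) : ℝ) := fun i =>
    div_nonneg (pow_nonneg (h0 i) _) (Nat.cast_nonneg _)
  have nn2 : ∀ i : Fin (n+1), (0:ℝ) ≤ (1 - x i) ^ (m-b) / (Nat.factorial (m-b) : ℝ) := fun i =>
    div_nonneg (pow_nonneg (by linarith [(hb i).2]) _) (Nat.cast_nonneg _)
  have nn3 : ∀ i : Fin n, (0:ℝ) ≤ (x i.succ - x i.castSucc) ^ (b-a-1) / (Nat.factorial (b-a-1) : ℝ) :=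
    fun i => div_nonneg (pow_nonneg (sub_nonneg.2 (hmid i)) _) (Nat.cast_nonneg _)
  rw [← ENNReal.ofReal_prod_of_nonneg (fun i _ => nn1 i),
    ← ENNReal.ofReal_prod_of_nonneg (fun i _ => nn2 i),
    ← ENNReal.ofReal_prod_of_nonneg (fun i _ => nn3 i),
    ← ENNReal.ofReal_mul (Finset.prod_nonneg fun i _ => nn2 i),
    ← ENNReal.ofReal_mul (Finset.prod_nonneg fun i _ => nn1 i)]
  congr 1
  rw [Finset.prod_mul_distrib]
  ring

lemma pred_iff (n m a b : ℕ) {N : ℕ} (σ : Elt n m a b ≃ Fin N) :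
    ((∀ i j : Fin (n+1), i < j → σ (spine i) < σ (spine j)) ∧
        (∀ i : Fin (n+1), ∀ k l : Fin (a-1), k < l → σ (down i k) < σ (down i l)) ∧
        (∀ i : Fin (n+1), ∀ k : Fin (a-1), σ (down i k) < σ (spine i)) ∧
        (∀ i : Fin (n+1), ∀ k l : Fin (m-b), k < l → σ (up i k) < σ (up i l)) ∧
        (∀ i : Fin (n+1), ∀ k : Fin (m-b), σ (spine i) < σ (up i k)) ∧
        (∀ i : Fin n, ∀ k l : Fin (b-a-1), k < l → σ (mid i k) < σ (mid i l)) ∧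
        (∀ i : Fin n, ∀ k : Fin (b-a-1),
          σ (spine i.castSucc) < σ (mid i k) ∧ σ (mid i k) < σ (spine i.succ))) ↔
      ∀ p q : I0 n m a b, Rel n m a b p q → σ p < σ q := by
  constructor
  · rintro ⟨c1, c2, c3, c4, c5, c6, c7⟩ p q hpq
    rcases p with i | (⟨i,k⟩ | (⟨i,k⟩ | ⟨i,k⟩)) <;>
      rcases q with j | (⟨j,l⟩ | (⟨j,l⟩ | ⟨j,l⟩)) <;>
      simp only [Rel] at hpq
    · exact c1 i j hpq
    · obtain rfl := hpq; exact c5 _ _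
    · obtain rfl := hpq; exact (c7 _ _).1
    · obtain rfl := hpq; exact c3 _ _
    · obtain ⟨rfl, hkl⟩ := hpq; exact c2 _ _ _ hkl
    · obtain ⟨rfl, hkl⟩ := hpq; exact c4 _ _ _ hkl
    · obtain rfl := hpq; exact (c7 _ _).2
    · obtain ⟨rfl, hkl⟩ := hpq; exact c6 _ _ _ hkl
  · intro h
    exact ⟨fun i j hij => h (Sum.inl i) (Sum.inl j) hij,
      fun i k l hkl => h (Sum.inr (Sum.inl (i,k))) (Sum.inr (Sum.inl (i,l))) ⟨rfl, hkl⟩,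
      fun i k => h (Sum.inr (Sum.inl (i,k))) (Sum.inl i) rfl,
      fun i k l hkl => h (Sum.inr (Sum.inr (Sum.inl (i,k)))) (Sum.inr (Sum.inr (Sum.inl (i,l)))) ⟨rfl, hkl⟩,
      fun i k => h (Sum.inl i) (Sum.inr (Sum.inr (Sum.inl (i,k)))) rfl,
      fun i k l hkl => h (Sum.inr (Sum.inr (Sum.inr (i,k)))) (Sum.inr (Sum.inr (Sum.inr (i,l)))) ⟨rfl, hkl⟩,
      fun i k => ⟨h (Sum.inl i.castSucc) (Sum.inr (Sum.inr (Sum.inr (i,k)))) rfl,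
        h (Sum.inr (Sum.inr (Sum.inr (i,k)))) (Sum.inl i.succ) rfl⟩⟩

end Main

set_option synthInstance.maxHeartbeats 1000000 in
set_option maxHeartbeats 2000000 in
/-- `e(Q_n^{m,a,b})/((m−1)n + m − b + a)!` equals the integral
`∫_{0<x₀<⋯<x_n<1} ∏_{i=0}^n (x_i^{a−1}/(a−1)!)((1−x_i)^{m−b}/(m−b)!)
  ∏_{i=0}^{n−1} (x_{i+1}−x_i)^{b−a−1}/(b−a−1)! dx`,
where `e(Q_n^{m,a,b})` is the number of linear extensions of `Q_n^{m,a,b}`, encoded as the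
number of bijections to `Fin ((m−1)n + m − b + a)` respecting the generating relations. -/
theorem linext_eq_integral (n m a b : ℕ) (hn : 1 ≤ n) (h1 : 1 ≤ a) (hab : a < b) (hbm : b ≤ m) :
    (Nat.card {σ : Elt n m a b ≃ Fin ((m-1)*n + m - b + a) //
        (∀ i j : Fin (n+1), i < j → σ (spine i) < σ (spine j)) ∧
        (∀ i : Fin (n+1), ∀ k l : Fin (a-1), k < l → σ (down i k) < σ (down i l)) ∧
        (∀ i : Fin (n+1), ∀ k : Fin (a-1), σ (down i k) < σ (spine i)) ∧
        (∀ i : Fin (n+1), ∀ k l : Fin (m-b), k < l → σ (up i k) < σ (up i l)) ∧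
        (∀ i : Fin (n+1), ∀ k : Fin (m-b), σ (spine i) < σ (up i k)) ∧
        (∀ i : Fin n, ∀ k l : Fin (b-a-1), k < l → σ (mid i k) < σ (mid i l)) ∧
        (∀ i : Fin n, ∀ k : Fin (b-a-1),
          σ (spine i.castSucc) < σ (mid i k) ∧ σ (mid i k) < σ (spine i.succ))} : ℝ) /
      (Nat.factorial ((m-1)*n + m - b + a) : ℝ) =
    ∫ x : Fin (n+1) → ℝ in
        {z : Fin (n+1) → ℝ | 0 < z 0 ∧ (∀ i : Fin n, z i.castSucc < z i.succ) ∧ z (Fin.last n) < 1},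
        (∏ i, x i ^ (a-1) / (Nat.factorial (a-1) : ℝ) *
          ((1 - x i) ^ (m-b) / (Nat.factorial (m-b) : ℝ))) *
        ∏ i : Fin n, (x i.succ - x i.castSucc) ^ (b-a-1) / (Nat.factorial (b-a-1) : ℝ) := by
  classical
  set N := (m-1)*n + m - b + a with hN
  have hcardI0 : Fintype.card (I0 n m a b) = N := by
    have hb1 : b ≤ (m-1)*n + m := le_trans hbm (Nat.le_add_left m _)
    have hcard : Fintype.card (I0 n m a b) =
        (n+1) + ((n+1)*(a-1) + ((n+1)*(m-b) + n*(b-a-1))) := by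
      simp [Fintype.card_sum, Fintype.card_prod, Fintype.card_fin]
    rw [hcard, hN]
    zify [h1, hbm, hab.le, show 1 ≤ b - a by omega, show 1 ≤ m by omega, hb1]
    push_cast
    ring
  have hvol1 : volume (chamberSet (Rel n m a b) 0 1) =
      (Nat.card {σ : I0 n m a b ≃ Fin N // ∀ p q, Rel n m a b p q → σ p < σ q} : ℕ) *
        ENNReal.ofReal (((1:ℝ) - 0) ^ N / (Nat.factorial N : ℝ)) :=
    chamber_volume (Rel n m a b) hcardI0 (by norm_num)
  have hvol2 : volume (chamberSet (Rel n m a b) 0 1) =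
      ∫⁻ x in regionA n, volume (Wfull n m a b x) := by
    rw [S_eq_preimage n m a b,
      (volume_measurePreserving_sumPiEquivProdPi
        (fun _ : I0 n m a b => ℝ)).measure_preimage_equiv,
      Measure.volume_eq_prod, Measure.prod_apply (measurableSet_T1 n m a b),
      ← lintegral_indicator (measurableSet_regionA n)]
    refine lintegral_congr fun x => ?_
    by_cases hx : x ∈ regionA n
    · have he : Prod.mk x ⁻¹' T1 n m a b = Wfull n m a b x := by
        ext r
        exact ⟨fun h => h.2, fun h => ⟨hx, h⟩⟩
      rw [Set.indicator_of_mem hx, he]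
    · have he : (Prod.mk x ⁻¹' T1 n m a b) = ∅ := by
        ext r
        exact ⟨fun h => (hx h.1).elim, fun h => h.elim⟩
      rw [Set.indicator_of_notMem hx, he, measure_empty]
  have hFm : Measurable (fun x : Fin (n+1) → ℝ =>
      (∏ i, x i ^ (a-1) / (Nat.factorial (a-1) : ℝ) *
        ((1 - x i) ^ (m-b) / (Nat.factorial (m-b) : ℝ))) *
      ∏ i : Fin n, (x i.succ - x i.castSucc) ^ (b-a-1) / (Nat.factorial (b-a-1) : ℝ)) := by
    refine Measurable.mul (Finset.measurable_prod _ fun i _ => ?_)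
      (Finset.measurable_prod _ fun i _ => ?_)
    · exact (((measurable_pi_apply i).pow_const _).div_const _).mul
        (((measurable_const.sub (measurable_pi_apply i)).pow_const _).div_const _)
    · exact (((measurable_pi_apply i.succ).sub
        (measurable_pi_apply i.castSucc)).pow_const _).div_const _
  have hFnn : ∀ x ∈ regionA n, (0:ℝ) ≤
      (∏ i, x i ^ (a-1) / (Nat.factorial (a-1) : ℝ) *
        ((1 - x i) ^ (m-b) / (Nat.factorial (m-b) : ℝ))) *
      ∏ i : Fin n, (x i.succ - x i.castSucc) ^ (b-a-1) / (Nat.factorial (b-a-1) : ℝ) :=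
    fun x hx =>
      mul_nonneg
        (Finset.prod_nonneg fun i _ => mul_nonneg
          (div_nonneg (pow_nonneg (regionA_bounds hx i).1.le _) (Nat.cast_nonneg _))
          (div_nonneg (pow_nonneg (by linarith [(regionA_bounds hx i).2]) _)
            (Nat.cast_nonneg _)))
        (Finset.prod_nonneg fun i _ => div_nonneg
          (pow_nonneg (sub_nonneg.2 (regionA_strictMono hx (Fin.castSucc_lt_succ : i.castSucc < i.succ)).le) _)
          (Nat.cast_nonneg _))
  rw [show {z : Fin (n+1) → ℝ | 0 < z 0 ∧ (∀ i : Fin n, z i.castSucc < z i.succ) ∧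
      z (Fin.last n) < 1} = regionA n from rfl]
  have hcard1 : (Nat.card {σ : Elt n m a b ≃ Fin N //
      (∀ i j : Fin (n+1), i < j → σ (spine i) < σ (spine j)) ∧
      (∀ i : Fin (n+1), ∀ k l : Fin (a-1), k < l → σ (down i k) < σ (down i l)) ∧
      (∀ i : Fin (n+1), ∀ k : Fin (a-1), σ (down i k) < σ (spine i)) ∧
      (∀ i : Fin (n+1), ∀ k l : Fin (m-b), k < l → σ (up i k) < σ (up i l)) ∧
      (∀ i : Fin (n+1), ∀ k : Fin (m-b), σ (spine i) < σ (up i k)) ∧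
      (∀ i : Fin n, ∀ k l : Fin (b-a-1), k < l → σ (mid i k) < σ (mid i l)) ∧
      (∀ i : Fin n, ∀ k : Fin (b-a-1),
        σ (spine i.castSucc) < σ (mid i k) ∧ σ (mid i k) < σ (spine i.succ))} : ℕ) =
      Nat.card {σ : I0 n m a b ≃ Fin N // ∀ p q, Rel n m a b p q → σ p < σ q} := by
    rw [Nat.card_congr (Equiv.subtypeEquivRight fun σ => pred_iff n m a b σ)]
    rfl
  rw [hcard1]
  calc (Nat.card {σ : I0 n m a b ≃ Fin N // ∀ p q, Rel n m a b p q → σ p < σ q} : ℝ) /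
      (Nat.factorial N : ℝ)
      = (volume (chamberSet (Rel n m a b) 0 1)).toReal := by
        rw [hvol1, ENNReal.toReal_mul, ENNReal.toReal_natCast,
          ENNReal.toReal_ofReal (by positivity)]
        rw [sub_zero, one_pow, mul_one_div]
    _ = (∫⁻ x in regionA n, ENNReal.ofReal
          ((∏ i, x i ^ (a-1) / (Nat.factorial (a-1) : ℝ) *
            ((1 - x i) ^ (m-b) / (Nat.factorial (m-b) : ℝ))) *
          ∏ i : Fin n, (x i.succ - x i.castSucc) ^ (b-a-1) /
            (Nat.factorial (b-a-1) : ℝ))).toReal := by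
        rw [hvol2]
        congr 1
        exact setLIntegral_congr_fun (measurableSet_regionA n)
          (fun x hx => Wfull_volume n m a b hx)
    _ = ∫ x in regionA n,
          (∏ i, x i ^ (a-1) / (Nat.factorial (a-1) : ℝ) *
            ((1 - x i) ^ (m-b) / (Nat.factorial (m-b) : ℝ))) *
          ∏ i : Fin n, (x i.succ - x i.castSucc) ^ (b-a-1) /
            (Nat.factorial (b-a-1) : ℝ) :=
        (integral_eq_lintegral_of_nonneg_ae
          ((ae_restrict_iff' (measurableSet_regionA n)).2
            (ae_of_all _ fun x hx => hFnn x hx))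
          hFm.aestronglyMeasurable).symm

end Cluster
end
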